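/- arXiv:2005.07663 — 15 statements merged into one kernel-verified Lean document; each statement's English description precedes it below -/
import Mathlib

section
/- Let X, Y, Z : ℝ → ℝ be C² functions and suppose that (Y(v) − Z(w))X'(u) + (X(u) − Z(w))Y'(v) − (X(u) + Y(v))Z'(w) = 0 for all (u,v,w) with u+v+w = 0. Then for all such (u,v,w) the following three equations also hold: (Y−Z)X'' − (X−Z)Y'' − (X'−Y')Z' = 0; (Y'+Z')X' + (X−Z)Y'' + (X+Y)Z'' = 0; (Y−Z)X'' + (X'+Z')Y' + (X+Y)Z'' = 0 (all functions of u, v, w respectively, evaluated at u, v, w = −u−v). -/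
/-!
Fixing `v`, the map `t ↦ A(t, v, -v - t)` vanishes identically, so its derivative vanishes;
this is the third identity. Since `A` is symmetric under `(X, u) ↔ (Y, v)`, the same
computation with the roles of `X` and `Y` exchanged gives the second identity, and the first
is their difference.
-/

variable {X Y Z : ℝ → ℝ}

/-- The expression `A(u, v, w)` of the zero mean curvature condition. -/
noncomputable def meanCurvatureNumerator (X Y Z : ℝ → ℝ) (u v w : ℝ) : ℝ :=
  (Y v - Z w) * deriv X u + (X u - Z w) * deriv Y v - (X u + Y v) * deriv Z w

theorem meanCurvatureNumerator_swap (u v w : ℝ) :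
    meanCurvatureNumerator Y X Z v u w = meanCurvatureNumerator X Y Z u v w := by
  unfold meanCurvatureNumerator
  ring

theorem hasDerivAt_meanCurvatureNumerator_line {u : ℝ} (v : ℝ)
    (hX : DifferentiableAt ℝ X u) (hX' : DifferentiableAt ℝ (deriv X) u)
    (hZ : DifferentiableAt ℝ Z (-v - u)) (hZ' : DifferentiableAt ℝ (deriv Z) (-v - u)) :
    HasDerivAt (fun t => meanCurvatureNumerator X Y Z t v (-v - t))
      ((Y v - Z (-v - u)) * deriv (deriv X) u + (deriv X u + deriv Z (-v - u)) * deriv Y v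
        + (X u + Y v) * deriv (deriv Z) (-v - u)) u := by
  have hZw := hZ.hasDerivAt.comp_const_sub (-v) u
  have hZw' := hZ'.hasDerivAt.comp_const_sub (-v) u
  have := (((hasDerivAt_const u (Y v)).sub hZw).mul hX'.hasDerivAt
    |>.add ((hX.hasDerivAt.sub hZw).mul_const (deriv Y v))).sub
    ((hX.hasDerivAt.add_const (Y v)).mul hZw')
  exact this.congr_deriv (by simp only [Pi.sub_apply]; ring)

theorem meanCurvatureNumerator_lineDeriv_eq_zero
    (hX : Differentiable ℝ X) (hX' : Differentiable ℝ (deriv X))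
    (hZ : Differentiable ℝ Z) (hZ' : Differentiable ℝ (deriv Z))
    (hA : ∀ u v w : ℝ, u + v + w = 0 → meanCurvatureNumerator X Y Z u v w = 0)
    {u v w : ℝ} (huvw : u + v + w = 0) :
    (Y v - Z w) * deriv (deriv X) u + (deriv X u + deriv Z w) * deriv Y v
      + (X u + Y v) * deriv (deriv Z) w = 0 := by
  obtain rfl : w = -v - u := by linarith
  have hline : (fun t => meanCurvatureNumerator X Y Z t v (-v - t)) = fun _ => 0 :=
    funext fun t => hA t v _ (by ring)
  refine (hasDerivAt_meanCurvatureNumerator_line v (hX u) (hX' u) (hZ _) (hZ' _)).unique ?_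
  exact hline ▸ hasDerivAt_const u 0

/-- If `X, Y, Z` are `C²` and `(Y−Z)X' + (X−Z)Y' − (X+Y)Z' = 0` on the plane `u+v+w=0`,
then the three differentiated identities `B₁ = B₂ = B₃ = 0` also hold on that plane. -/
theorem stmt_3 (X Y Z : ℝ → ℝ)
    (hX : ContDiff ℝ 2 X) (hY : ContDiff ℝ 2 Y) (hZ : ContDiff ℝ 2 Z)
    (hA : ∀ u v w : ℝ, u + v + w = 0 →
      (Y v - Z w) * deriv X u + (X u - Z w) * deriv Y v - (X u + Y v) * deriv Z w = 0) :
    ∀ u v w : ℝ, u + v + w = 0 →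
      ((Y v - Z w) * deriv (deriv X) u - (X u - Z w) * deriv (deriv Y) v
          - (deriv X u - deriv Y v) * deriv Z w = 0) ∧
      ((deriv Y v + deriv Z w) * deriv X u + (X u - Z w) * deriv (deriv Y) v
          + (X u + Y v) * deriv (deriv Z) w = 0) ∧
      ((Y v - Z w) * deriv (deriv X) u + (deriv X u + deriv Z w) * deriv Y v
          + (X u + Y v) * deriv (deriv Z) w = 0) := by
  intro u v w huvw
  have hA' : ∀ v u w : ℝ, v + u + w = 0 → meanCurvatureNumerator Y X Z v u w = 0 :=
    fun v u w h => (meanCurvatureNumerator_swap u v w).trans (hA u v w (by linarith))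
  have hB₃ := meanCurvatureNumerator_lineDeriv_eq_zero (hX.differentiable two_ne_zero)
    hX.differentiable_deriv_two (hZ.differentiable two_ne_zero)
    hZ.differentiable_deriv_two hA huvw
  have hB₂ := meanCurvatureNumerator_lineDeriv_eq_zero (hY.differentiable two_ne_zero)
    hY.differentiable_deriv_two (hZ.differentiable two_ne_zero)
    hZ.differentiable_deriv_two hA' (by linarith : v + u + w = 0)
  refine ⟨by linarith, by linarith, hB₃⟩
end

section
/- Let X, Y, Z : ℝ → ℝ be C³ functions such that X'(u) ≠ 0, Y'(v) ≠ 0, Z'(w) ≠ 0 for all real u, v, w. Suppose that for all u, v ∈ ℝ, setting w = −u−v: (Y(v) − Z(w))X'(u) + (X(u) − Z(w))Y'(v) − (X(u) + Y(v))Z'(w) = 0, and moreover Y(v) ≠ Z(w), X(u) ≠ Z(w), and X(u) + Y(v) ≠ 0. Then there exists a constant K ∈ ℝ such that X'''(t) = K·X'(t), Y'''(t) = K·Y'(t) and Z'''(t) = K·Z'(t) for all t ∈ ℝ. -/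
/-!
Replacing `Z` by `C := -Z` turns the equation into
`(B + C) A' + (A + C) B' + (A + B) C' = 0` on the plane `u + v + w = 0` (with `A = X`, `B = Y`),
which is symmetric under all permutations of `(A, B, C)`. Differentiating it along the plane in
the directions `∂ᵤ`, `∂ᵥ` and `∂ᵤ∂ᵥ` and eliminating the undifferentiated values (dividing by
`A + B ≠ 0`) gives
`C''' A' B' + C' A'' B'' + C'' (A' B'' + A'' B') = 0`. Subtracting the same identity with the roles
of `A` and `C` exchanged leaves `B' (A''' C' - C''' A') = 0`, so `A''' / A'` and `C''' / C'` are one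
and the same constant.
-/

def SymmetricZMC (A B C : ℝ → ℝ) : Prop :=
  ∀ u v w, u + v + w = 0 →
    (B v + C w) * deriv A u + (A u + C w) * deriv B v + (A u + B v) * deriv C w = 0

lemma ContDiff.differentiable_deriv_deriv {f : ℝ → ℝ} (hf : ContDiff ℝ 3 f) :
    Differentiable ℝ (deriv (deriv f)) :=
  (hf.deriv' (n := 2)).differentiable_deriv_two

lemma hasDerivAt_comp_neg_sub {f : ℝ → ℝ} {u v : ℝ} (hf : DifferentiableAt ℝ f (-u - v)) :
    HasDerivAt (fun s => f (-s - v)) (-deriv f (-u - v)) u := by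
  have hline : HasDerivAt (fun s : ℝ => -s - v) (-1) u := (hasDerivAt_neg u).sub_const v
  simpa [Function.comp_def] using hf.hasDerivAt.comp u hline

lemma HasDerivAt.eq_zero_of_forall_eq_zero {f : ℝ → ℝ} {f' x : ℝ} (hf : HasDerivAt f f' x)
    (h : ∀ t, f t = 0) : f' = 0 := by
  obtain rfl : f = fun _ => 0 := funext h
  exact hf.unique (hasDerivAt_const x 0)

lemma eq_div_mul_of_mul_eq {a b c d : ℝ} (h : a * d = c * b) (hd : d ≠ 0) : a = c / d * b := by
  field_simp
  linear_combination h

namespace SymmetricZMC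

variable {A B C : ℝ → ℝ}

lemma swap (h : SymmetricZMC A B C) : SymmetricZMC B A C := fun v u w huvw => by
  linear_combination h u v w (by linarith)

lemma rotate (h : SymmetricZMC A B C) : SymmetricZMC B C A := fun v w u huvw => by
  linear_combination h u v w (by linarith)

lemma deriv_fst (h : SymmetricZMC A B C) (hA : ContDiff ℝ 2 A) (hC : ContDiff ℝ 2 C) :
    ∀ u v w, u + v + w = 0 →
      (B v + C w) * deriv (deriv A) u + deriv B v * (deriv A u - deriv C w)
        - (A u + B v) * deriv (deriv C) w = 0 := by
  intro u v w huvw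
  obtain rfl : w = -u - v := by linarith
  have hC₀ := hasDerivAt_comp_neg_sub (hC.differentiable (by norm_num) (-u - v))
  have hC₁ := hasDerivAt_comp_neg_sub (hC.differentiable_deriv_two (-u - v))
  have hA₀ := (hA.differentiable (by norm_num) u).hasDerivAt
  have hA₁ := (hA.differentiable_deriv_two u).hasDerivAt
  have hE := ((((hasDerivAt_const u (B v)).fun_add hC₀).fun_mul hA₁).fun_add
    ((hA₀.fun_add hC₀).mul_const (deriv B v))).fun_add ((hA₀.add_const (B v)).fun_mul hC₁)
  linear_combination hE.eq_zero_of_forall_eq_zero fun s => h s v (-s - v) (by ring)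

lemma deriv_fst_snd (h : SymmetricZMC A B C) (hA : ContDiff ℝ 2 A) (hB : ContDiff ℝ 2 B)
    (hC : ContDiff ℝ 3 C) :
    ∀ u v w, u + v + w = 0 →
      (deriv B v - deriv C w) * deriv (deriv A) u + (deriv A u - deriv C w) * deriv (deriv B) v
        + (A u + B v) * deriv (deriv (deriv C)) w = 0 := by
  have hv := h.swap.deriv_fst hB (hC.of_le (by norm_num))
  intro u v w huvw
  obtain rfl : w = -u - v := by linarith
  have hC₀ := hasDerivAt_comp_neg_sub (hC.differentiable (by norm_num) (-u - v))
  have hC₁ := hasDerivAt_comp_neg_sub ((hC.of_le (by norm_num)).differentiable_deriv_two (-u - v))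
  have hC₂ := hasDerivAt_comp_neg_sub (hC.differentiable_deriv_deriv (-u - v))
  have hA₀ := (hA.differentiable (by norm_num) u).hasDerivAt
  have hA₁ := (hA.differentiable_deriv_two u).hasDerivAt
  have hE := (((hA₀.fun_add hC₀).mul_const (deriv (deriv B) v)).fun_add
    (hA₁.fun_mul ((hasDerivAt_const u (deriv B v)).fun_sub hC₁))).fun_sub
    ((hA₀.const_add (B v)).fun_mul hC₂)
  linear_combination hE.eq_zero_of_forall_eq_zero fun s => hv v s (-s - v) (by ring)

lemma third_deriv_identity (h : SymmetricZMC A B C) (hA : ContDiff ℝ 2 A) (hB : ContDiff ℝ 2 B)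
    (hC : ContDiff ℝ 3 C) (hAB : ∀ u v w, u + v + w = 0 → A u + B v ≠ 0) :
    ∀ u v w, u + v + w = 0 →
      deriv (deriv (deriv C)) w * deriv A u * deriv B v
        + deriv C w * deriv (deriv A) u * deriv (deriv B) v
        + deriv (deriv C) w * (deriv A u * deriv (deriv B) v + deriv (deriv A) u * deriv B v)
        = 0 := by
  intro u v w huvw
  have hC₂ : ContDiff ℝ 2 C := hC.of_le (by norm_num)
  have e := h u v w huvw
  have eu := h.deriv_fst hA hC₂ u v w huvw
  have ev := h.swap.deriv_fst hB hC₂ v u w (by linarith)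
  have euv := h.deriv_fst_snd hA hB hC u v w huvw
  refine (mul_eq_zero.mp ?_).resolve_left (hAB u v w huvw)
  linear_combination deriv (deriv A) u * deriv (deriv B) v * e
    - deriv A u * deriv (deriv B) v * eu - deriv B v * deriv (deriv A) u * ev
    + deriv A u * deriv B v * euv

lemma third_deriv_cross (h : SymmetricZMC A B C) (hA : ContDiff ℝ 3 A) (hB : ContDiff ℝ 2 B)
    (hC : ContDiff ℝ 3 C) (hAB : ∀ u v w, u + v + w = 0 → A u + B v ≠ 0)
    (hBC : ∀ u v w, u + v + w = 0 → B v + C w ≠ 0) (hB' : ∀ v, deriv B v ≠ 0) (u w : ℝ) :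
    deriv (deriv (deriv A)) u * deriv C w = deriv (deriv (deriv C)) w * deriv A u := by
  have huvw : u + (-u - w) + w = 0 := by ring
  have idC := h.third_deriv_identity (hA.of_le (by norm_num)) hB hC hAB u (-u - w) w huvw
  have idA := h.rotate.third_deriv_identity hB (hC.of_le (by norm_num)) hA
    (fun v w u h' => hBC u v w (by linarith)) (-u - w) w u (by linarith)
  refine mul_left_cancel₀ (hB' (-u - w)) ?_
  linear_combination idA - idC

end SymmetricZMC

/-- If `X, Y, Z` are `C³` with nowhere-vanishing derivatives satisfying the separable zero
mean curvature equation `(Y−Z)X' + (X−Z)Y' − (X+Y)Z' = 0` on the plane `u+v+w=0`, together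
with the nondegeneracy conditions `Y ≠ Z`, `X ≠ Z`, `X + Y ≠ 0` there, then there is a
constant `K` with `X''' = K·X'`, `Y''' = K·Y'` and `Z''' = K·Z'` everywhere. -/
theorem stmt_4 (X Y Z : ℝ → ℝ)
    (hX : ContDiff ℝ 3 X) (hY : ContDiff ℝ 3 Y) (hZ : ContDiff ℝ 3 Z)
    (hX' : ∀ u : ℝ, deriv X u ≠ 0) (hY' : ∀ v : ℝ, deriv Y v ≠ 0)
    (hZ' : ∀ w : ℝ, deriv Z w ≠ 0)
    (heq : ∀ u v : ℝ,
      (Y v - Z (-u - v)) * deriv X u + (X u - Z (-u - v)) * deriv Y v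
        - (X u + Y v) * deriv Z (-u - v) = 0)
    (hnd : ∀ u v : ℝ,
      Y v ≠ Z (-u - v) ∧ X u ≠ Z (-u - v) ∧ X u + Y v ≠ 0) :
    ∃ K : ℝ,
      (∀ t : ℝ, deriv (deriv (deriv X)) t = K * deriv X t) ∧
      (∀ t : ℝ, deriv (deriv (deriv Y)) t = K * deriv Y t) ∧
      (∀ t : ℝ, deriv (deriv (deriv Z)) t = K * deriv Z t) := by
  have onPlane {P : ℝ → ℝ → ℝ → Prop} (hP : ∀ u v, P u v (-u - v)) :
      ∀ u v w, u + v + w = 0 → P u v w := fun u v w huvw => by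
    obtain rfl : w = -u - v := by linarith
    exact hP u v
  have hnegZ : ContDiff ℝ 3 (-Z) := hZ.neg
  have hnegZ' (w : ℝ) : deriv (-Z) w ≠ 0 := by simpa [deriv.neg] using hZ' w
  have h : SymmetricZMC X Y (-Z) := onPlane fun u v => by
    simp only [Pi.neg_apply, deriv.neg]
    linear_combination heq u v
  have hXY := onPlane (P := fun u v _ => X u + Y v ≠ 0) fun u v => (hnd u v).2.2
  have hYZ := onPlane (P := fun _ v w => Y v + (-Z) w ≠ 0) fun u v => by
    simpa [← sub_eq_add_neg] using sub_ne_zero_of_ne (hnd u v).1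
  have hXZ := onPlane (P := fun u _ w => X u + (-Z) w ≠ 0) fun u v => by
    simpa [← sub_eq_add_neg] using sub_ne_zero_of_ne (hnd u v).2.1
  have crossX := h.third_deriv_cross hX (hY.of_le (by norm_num)) hnegZ hXY hYZ hY'
  have crossY := h.swap.third_deriv_cross hY (hX.of_le (by norm_num)) hnegZ
    (fun v u w huvw => by rw [add_comm]; exact hXY u v w (by linarith))
    (fun v u w huvw => hXZ u v w (by linarith)) hX'
  set K := deriv (deriv (deriv (-Z))) 0 / deriv (-Z) 0
  have hXK (t : ℝ) : deriv (deriv (deriv X)) t = K * deriv X t :=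
    eq_div_mul_of_mul_eq (crossX t 0) (hnegZ' 0)
  refine ⟨K, hXK, fun t => eq_div_mul_of_mul_eq (crossY t 0) (hnegZ' 0), fun t => ?_⟩
  have hZK : deriv (deriv (deriv (-Z))) t = K * deriv (-Z) t := by
    refine mul_left_cancel₀ (hX' 0) ?_
    linear_combination (crossX 0 t).symm + deriv (-Z) t * hXK 0
  simpa using hZK
end

section
/- Let k > 0 and let a_i, b_i, c_i (i = 1,2,3) be real numbers. Define X(u) = a₁ + b₁e^{ku} + c₁e^{−ku}, Y(v) = a₂ + b₂e^{kv} + c₂e^{−kv}, Z(w) = a₃ + b₃e^{kw} + c₃e^{−kw}. Then (Y(v) − Z(w))X'(u) + (X(u) − Z(w))Y'(v) − (X(u) + Y(v))Z'(w) = 0 holds for all (u,v,w) with u+v+w = 0 if and only if the following six equations hold: (a₂−a₃)c₁ + 2b₂b₃ = 0; (a₁−a₃)c₂ + 2b₁b₃ = 0; (a₂−a₃)b₁ + 2c₂c₃ = 0; (a₁−a₃)b₂ + 2c₁c₃ = 0; (a₁+a₂)b₃ + 2c₁c₂ = 0; (a₁+a₂)c₃ + 2b₁b₂ = 0. -/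
/-! With `s = e^{ku}`, `t = e^{kv}` and `w = -u - v` we have `e^{kw} = 1/(st)`, and after
multiplying by `st/k` the equation becomes a polynomial identity in `s, t > 0` whose only
monomials are `s²t², s²t, st², s, t, 1`. Their coefficients are exactly the six constraints,
and such a polynomial vanishes on the open quadrant iff all its coefficients vanish. -/

/-- The exponential ansatz `a + b·e^{ku} + c·e^{−ku}` (case `K = k² > 0`). -/
noncomputable def expAnsatz (a b c k : ℝ) : ℝ → ℝ :=
  fun u => a + b * Real.exp (k * u) + c * Real.exp (-(k * u))

open Real

lemma hasDerivAt_expAnsatz (a b c k u : ℝ) :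
    HasDerivAt (expAnsatz a b c k) (k * (b * exp (k * u) - c * exp (-(k * u)))) u := by
  have hlin : HasDerivAt (fun u => k * u) k u := by simpa using (hasDerivAt_id u).const_mul k
  have hneg : HasDerivAt (fun u => -(k * u)) (-k) u := hlin.neg
  exact (((hasDerivAt_const u a).add (hlin.exp.const_mul b)).add
    (hneg.exp.const_mul c)).congr_deriv (by ring)

noncomputable def zeroMeanCurvatureExpr (X Y Z : ℝ → ℝ) (u v w : ℝ) : ℝ :=
  (Y v - Z w) * deriv X u + (X u - Z w) * deriv Y v - (X u + Y v) * deriv Z w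

lemma zeroMeanCurvatureExpr_expAnsatz_mul (k a₁ b₁ c₁ a₂ b₂ c₂ a₃ b₃ c₃ u v : ℝ) :
    zeroMeanCurvatureExpr (expAnsatz a₁ b₁ c₁ k) (expAnsatz a₂ b₂ c₂ k) (expAnsatz a₃ b₃ c₃ k)
        u v (-u - v) * (exp (k * u) * exp (k * v))
      = k * (((a₁ + a₂) * c₃ + 2 * b₁ * b₂) * exp (k * u) ^ 2 * exp (k * v) ^ 2
          + ((a₂ - a₃) * b₁ + 2 * c₂ * c₃) * exp (k * u) ^ 2 * exp (k * v)
          + ((a₁ - a₃) * b₂ + 2 * c₁ * c₃) * exp (k * u) * exp (k * v) ^ 2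
          - ((a₁ - a₃) * c₂ + 2 * b₁ * b₃) * exp (k * u)
          - ((a₂ - a₃) * c₁ + 2 * b₂ * b₃) * exp (k * v)
          - ((a₁ + a₂) * b₃ + 2 * c₁ * c₂)) := by
  have hw : k * (-u - v) = -(k * u + k * v) := by ring
  simp only [zeroMeanCurvatureExpr, (hasDerivAt_expAnsatz _ _ _ _ _).deriv, expAnsatz, hw,
    neg_neg, exp_neg, exp_add]
  field_simp
  ring

lemma coeffs_eq_zero_of_forall_pos {A B C D E F : ℝ}
    (h : ∀ s t : ℝ, 0 < s → 0 < t →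
      A * s ^ 2 * t ^ 2 + B * s ^ 2 * t + C * s * t ^ 2 - D * s - E * t - F = 0) :
    A = 0 ∧ B = 0 ∧ C = 0 ∧ D = 0 ∧ E = 0 ∧ F = 0 := by
  -- the evaluation matrix of the six monomials at these six points is invertible
  have := h 1 1 one_pos one_pos
  have := h 2 1 two_pos one_pos
  have := h 1 2 one_pos two_pos
  have := h 2 2 two_pos two_pos
  have := h 3 1 three_pos one_pos
  have := h 1 3 one_pos three_pos
  refine ⟨?_, ?_, ?_, ?_, ?_, ?_⟩ <;> linarith

/-- For the exponential ansatz with `k > 0`, the separable zero mean curvature equation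
`(Y−Z)X' + (X−Z)Y' − (X+Y)Z' = 0` on the plane `u+v+w=0` holds iff the six constraint
equations (11) relating the constants `aᵢ, bᵢ, cᵢ` hold. -/
theorem stmt_5 (k a₁ b₁ c₁ a₂ b₂ c₂ a₃ b₃ c₃ : ℝ) (hk : 0 < k) :
    (∀ u v w : ℝ, u + v + w = 0 →
      (expAnsatz a₂ b₂ c₂ k v - expAnsatz a₃ b₃ c₃ k w) * deriv (expAnsatz a₁ b₁ c₁ k) u
        + (expAnsatz a₁ b₁ c₁ k u - expAnsatz a₃ b₃ c₃ k w) * deriv (expAnsatz a₂ b₂ c₂ k) v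
        - (expAnsatz a₁ b₁ c₁ k u + expAnsatz a₂ b₂ c₂ k v) * deriv (expAnsatz a₃ b₃ c₃ k) w
        = 0)
    ↔ ((a₂ - a₃) * c₁ + 2 * b₂ * b₃ = 0 ∧
       (a₁ - a₃) * c₂ + 2 * b₁ * b₃ = 0 ∧
       (a₂ - a₃) * b₁ + 2 * c₂ * c₃ = 0 ∧
       (a₁ - a₃) * b₂ + 2 * c₁ * c₃ = 0 ∧
       (a₁ + a₂) * b₃ + 2 * c₁ * c₂ = 0 ∧
       (a₁ + a₂) * c₃ + 2 * b₁ * b₂ = 0) := by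
  have key := zeroMeanCurvatureExpr_expAnsatz_mul k a₁ b₁ c₁ a₂ b₂ c₂ a₃ b₃ c₃
  constructor
  · intro h
    have hexp (r : ℝ) (hr : 0 < r) : exp (k * (log r / k)) = r := by
      rw [mul_div_cancel₀ _ hk.ne', exp_log hr]
    obtain ⟨h₆, h₃, h₄, h₂, h₁, h₅⟩ := coeffs_eq_zero_of_forall_pos fun s t hs ht => by
      have := key (log s / k) (log t / k)
      rw [hexp s hs, hexp t ht, zeroMeanCurvatureExpr, h _ _ _ (by ring), zero_mul] at this
      exact (mul_eq_zero.mp this.symm).resolve_left hk.ne'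
    exact ⟨h₁, h₂, h₃, h₄, h₅, h₆⟩
  · rintro ⟨h₁, h₂, h₃, h₄, h₅, h₆⟩ u v w huvw
    obtain rfl : w = -u - v := by linarith
    have := key u v
    rw [h₁, h₂, h₃, h₄, h₅, h₆] at this
    simpa [zeroMeanCurvatureExpr, (exp_pos _).ne'] using this
end

section
/- Let k > 0 and let a_i, b_i, c_i (i = 1,2,3) be real numbers. Define X(u) = a₁ + b₁cos(ku) + c₁sin(ku), Y(v) = a₂ + b₂cos(kv) + c₂sin(kv), Z(w) = a₃ + b₃cos(kw) + c₃sin(kw). Then (Y(v) − Z(w))X'(u) + (X(u) − Z(w))Y'(v) − (X(u) + Y(v))Z'(w) = 0 holds for all (u,v,w) with u+v+w = 0 if and only if the following six equations hold: (a₂−a₃)c₁ − b₃c₂ − b₂c₃ = 0; (a₁−a₃)c₂ − b₃c₁ − b₁c₃ = 0; (a₂−a₃)b₁ + b₂b₃ − c₂c₃ = 0; (a₁−a₃)b₂ + b₁b₃ − c₁c₃ = 0; (a₁+a₂)b₃ + b₁b₂ − c₁c₂ = 0; (a₁+a₂)c₃ − b₂c₁ − b₁c₂ = 0. -/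
/-!
Substituting `w = -u - v` and expanding with the addition formulas (and `sin² + cos² = 1`), the
left-hand side becomes `k` times a combination of `cos ku, cos kv, sin ku, sin kv, sin (ku + kv)`
and `cos (ku + kv)` whose coefficients are exactly the six expressions of the statement. These six
functions of `(ku, kv)` are linearly independent, as evaluation at six points shows.
-/

/-- The trigonometric ansatz `a + b·cos(ku) + c·sin(ku)` (case `K = −k² < 0`). -/
noncomputable def trigAnsatz (a b c k : ℝ) : ℝ → ℝ :=
  fun u => a + b * Real.cos (k * u) + c * Real.sin (k * u)

open Real

lemma hasDerivAt_trigAnsatz (a b c k u : ℝ) :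
    HasDerivAt (trigAnsatz a b c k) (k * (c * cos (k * u) - b * sin (k * u))) u := by
  have hku : HasDerivAt (fun x : ℝ => k * x) k u := by
    simpa using (hasDerivAt_id u).const_mul k
  have h := ((hasDerivAt_const u a).add (((hasDerivAt_cos (k * u)).comp u hku).const_mul b)).add
    (((hasDerivAt_sin (k * u)).comp u hku).const_mul c)
  exact h.congr_deriv (by ring)

lemma deriv_trigAnsatz (a b c k u : ℝ) :
    deriv (trigAnsatz a b c k) u = k * (c * cos (k * u) - b * sin (k * u)) :=
  (hasDerivAt_trigAnsatz a b c k u).deriv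

lemma trigAnsatz_equation_eq (k a₁ b₁ c₁ a₂ b₂ c₂ a₃ b₃ c₃ u v : ℝ) :
    (trigAnsatz a₂ b₂ c₂ k v - trigAnsatz a₃ b₃ c₃ k (-u - v)) * deriv (trigAnsatz a₁ b₁ c₁ k) u
        + (trigAnsatz a₁ b₁ c₁ k u - trigAnsatz a₃ b₃ c₃ k (-u - v))
          * deriv (trigAnsatz a₂ b₂ c₂ k) v
        - (trigAnsatz a₁ b₁ c₁ k u + trigAnsatz a₂ b₂ c₂ k v)
          * deriv (trigAnsatz a₃ b₃ c₃ k) (-u - v)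
      = k * (((a₂ - a₃) * c₁ - b₃ * c₂ - b₂ * c₃) * cos (k * u)
           + ((a₁ - a₃) * c₂ - b₃ * c₁ - b₁ * c₃) * cos (k * v)
           - ((a₂ - a₃) * b₁ + b₂ * b₃ - c₂ * c₃) * sin (k * u)
           - ((a₁ - a₃) * b₂ + b₁ * b₃ - c₁ * c₃) * sin (k * v)
           - ((a₁ + a₂) * b₃ + b₁ * b₂ - c₁ * c₂) * sin (k * u + k * v)
           - ((a₁ + a₂) * c₃ - b₂ * c₁ - b₁ * c₂) * cos (k * u + k * v)) := by
  simp only [deriv_trigAnsatz, trigAnsatz, show k * (-u - v) = -(k * u + k * v) by ring,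
    cos_neg, sin_neg, cos_add, sin_add]
  linear_combination
    (k * ((c₂ * c₃ - b₂ * b₃) * sin (k * u) - (c₂ * b₃ + b₂ * c₃) * cos (k * u)))
      * sin_sq_add_cos_sq (k * v)
    + (k * ((c₁ * c₃ - b₁ * b₃) * sin (k * v) - (c₁ * b₃ + b₁ * c₃) * cos (k * v)))
      * sin_sq_add_cos_sq (k * u)

lemma eq_zero_of_forall_cos_sin_add_combination {A B C D E F : ℝ}
    (h : ∀ s t : ℝ, A * cos s + B * cos t + C * sin s + D * sin t
      + E * sin (s + t) + F * cos (s + t) = 0) :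
    A = 0 ∧ B = 0 ∧ C = 0 ∧ D = 0 ∧ E = 0 ∧ F = 0 := by
  have h₁ := h 0 0
  have h₂ := h π 0
  have h₃ := h 0 π
  have h₄ := h (π / 2) 0
  have h₅ := h 0 (π / 2)
  have h₆ := h (π / 2) (π / 2)
  rw [add_halves] at h₆
  simp only [add_zero, zero_add, cos_zero, sin_zero, cos_pi, sin_pi, cos_pi_div_two,
    sin_pi_div_two, mul_zero, mul_one, mul_neg] at h₁ h₂ h₃ h₄ h₅ h₆
  refine ⟨?_, ?_, ?_, ?_, ?_, ?_⟩ <;> linarith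

/-- For the trigonometric ansatz with `k > 0`, the separable zero mean curvature equation
`(Y−Z)X' + (X−Z)Y' − (X+Y)Z' = 0` on the plane `u+v+w=0` holds iff the six constraint
equations (13) relating the constants `aᵢ, bᵢ, cᵢ` hold. -/
theorem stmt_6 (k a₁ b₁ c₁ a₂ b₂ c₂ a₃ b₃ c₃ : ℝ) (hk : 0 < k) :
    (∀ u v w : ℝ, u + v + w = 0 →
      (trigAnsatz a₂ b₂ c₂ k v - trigAnsatz a₃ b₃ c₃ k w) * deriv (trigAnsatz a₁ b₁ c₁ k) u
        + (trigAnsatz a₁ b₁ c₁ k u - trigAnsatz a₃ b₃ c₃ k w) * deriv (trigAnsatz a₂ b₂ c₂ k) v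
        - (trigAnsatz a₁ b₁ c₁ k u + trigAnsatz a₂ b₂ c₂ k v) * deriv (trigAnsatz a₃ b₃ c₃ k) w
        = 0)
    ↔ ((a₂ - a₃) * c₁ - b₃ * c₂ - b₂ * c₃ = 0 ∧
       (a₁ - a₃) * c₂ - b₃ * c₁ - b₁ * c₃ = 0 ∧
       (a₂ - a₃) * b₁ + b₂ * b₃ - c₂ * c₃ = 0 ∧
       (a₁ - a₃) * b₂ + b₁ * b₃ - c₁ * c₃ = 0 ∧
       (a₁ + a₂) * b₃ + b₁ * b₂ - c₁ * c₂ = 0 ∧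
       (a₁ + a₂) * c₃ - b₂ * c₁ - b₁ * c₂ = 0) := by
  constructor
  · intro h
    have hcomb : ∀ s t : ℝ, _ := fun s t => by
      have hst := h (s / k) (t / k) (-(s / k) - t / k) (by ring)
      rw [trigAnsatz_equation_eq, mul_div_cancel₀ s hk.ne', mul_div_cancel₀ t hk.ne'] at hst
      exact (mul_eq_zero.mp hst).resolve_left hk.ne'
    simpa only [neg_eq_zero] using eq_zero_of_forall_cos_sin_add_combination
      (C := -_) (D := -_) (E := -_) (F := -_) fun s t => by linear_combination hcomb s t
  · rintro ⟨h₁, h₂, h₃, h₄, h₅, h₆⟩ u v w huvw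
    obtain rfl : w = -u - v := by linarith
    rw [trigAnsatz_equation_eq, h₁, h₂, h₃, h₄, h₅, h₆]
    ring
end

section
/- Let a_i, b_i, c_i (i = 1,2,3) be real numbers. Define X(u) = a₁ + b₁u + c₁u², Y(v) = a₂ + b₂v + c₂v², Z(w) = a₃ + b₃w + c₃w². Then (Y(v) − Z(w))X'(u) + (X(u) − Z(w))Y'(v) − (X(u) + Y(v))Z'(w) = 0 holds for all (u,v,w) with u+v+w = 0 if and only if the following six equations hold: a₁(b₂−b₃) + a₂(b₁−b₃) − a₃(b₁+b₂) = 0; b₁b₂ + b₂b₃ + 2c₁(a₂−a₃) + 2c₃(a₁+a₂) = 0; b₁b₂ + b₁b₃ + 2c₂(a₁−a₃) + 2c₃(a₁+a₂) = 0; c₁(b₂+b₃) + c₃(b₁−b₂) = 0; c₂(b₁+b₃) − c₃(b₁−b₂) = 0; c₁c₂ − c₁c₃ − c₂c₃ = 0. -/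
/-- The quadratic ansatz `a + b·u + c·u²` (case `K = 0`). -/
noncomputable def quadAnsatz (a b c : ℝ) : ℝ → ℝ :=
  fun u => a + b * u + c * u ^ 2

/-!
On the plane `w = -u - v` the left-hand side becomes a cubic polynomial in `(u, v)`, and it
is a combination, with the six constraint expressions as coefficients, of the linearly
independent polynomials `1, u, v, u² + 2uv, 2uv + v², 2uv(u + v)`. It vanishes identically
iff all six coefficients vanish, which is read off from its values at six points.
-/

lemma hasDerivAt_quadAnsatz (a b c u : ℝ) : HasDerivAt (quadAnsatz a b c) (b + 2 * c * u) u := by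
  have h : HasDerivAt (fun x => a + b * x + c * x ^ 2) (b * 1 + c * (2 * u ^ 1)) u :=
    ((hasDerivAt_id u).const_mul b |>.const_add a).add ((hasDerivAt_pow 2 u).const_mul c)
  exact h.congr_deriv (by ring)

lemma deriv_quadAnsatz (a b c u : ℝ) : deriv (quadAnsatz a b c) u = b + 2 * c * u :=
  (hasDerivAt_quadAnsatz a b c u).deriv

lemma quadAnsatz_zmc_on_plane (a₁ b₁ c₁ a₂ b₂ c₂ a₃ b₃ c₃ u v : ℝ) :
    (quadAnsatz a₂ b₂ c₂ v - quadAnsatz a₃ b₃ c₃ (-u - v)) * deriv (quadAnsatz a₁ b₁ c₁) u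
        + (quadAnsatz a₁ b₁ c₁ u - quadAnsatz a₃ b₃ c₃ (-u - v)) * deriv (quadAnsatz a₂ b₂ c₂) v
        - (quadAnsatz a₁ b₁ c₁ u + quadAnsatz a₂ b₂ c₂ v) * deriv (quadAnsatz a₃ b₃ c₃) (-u - v)
      = (a₁ * (b₂ - b₃) + a₂ * (b₁ - b₃) - a₃ * (b₁ + b₂))
        + (b₁ * b₂ + b₂ * b₃ + 2 * c₁ * (a₂ - a₃) + 2 * c₃ * (a₁ + a₂)) * u
        + (b₁ * b₂ + b₁ * b₃ + 2 * c₂ * (a₁ - a₃) + 2 * c₃ * (a₁ + a₂)) * v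
        + (c₁ * (b₂ + b₃) + c₃ * (b₁ - b₂)) * (u ^ 2 + 2 * u * v)
        + (c₂ * (b₁ + b₃) - c₃ * (b₁ - b₂)) * (2 * u * v + v ^ 2)
        + (c₁ * c₂ - c₁ * c₃ - c₂ * c₃) * (2 * u * v * (u + v)) := by
  simp only [deriv_quadAnsatz, quadAnsatz]
  ring

lemma forall_combination_eq_zero_iff (e₀ e₁ e₂ e₃ e₄ e₅ : ℝ) :
    (∀ u v : ℝ, e₀ + e₁ * u + e₂ * v + e₃ * (u ^ 2 + 2 * u * v) + e₄ * (2 * u * v + v ^ 2)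
        + e₅ * (2 * u * v * (u + v)) = 0)
      ↔ e₀ = 0 ∧ e₁ = 0 ∧ e₂ = 0 ∧ e₃ = 0 ∧ e₄ = 0 ∧ e₅ = 0 := by
  constructor
  · intro h
    have h00 := h 0 0
    have h10 := h 1 0
    have hm10 := h (-1) 0
    have h01 := h 0 1
    have h0m1 := h 0 (-1)
    have h11 := h 1 1
    norm_num at h00 h10 hm10 h01 h0m1 h11
    refine ⟨h00, ?_, ?_, ?_, ?_, ?_⟩ <;> linarith
  · rintro ⟨rfl, rfl, rfl, rfl, rfl, rfl⟩ u v
    ring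

/-- For the quadratic ansatz, the separable zero mean curvature equation
`(Y−Z)X' + (X−Z)Y' − (X+Y)Z' = 0` on the plane `u+v+w=0` holds iff the six constraint
equations (15) relating the constants `aᵢ, bᵢ, cᵢ` hold. -/
theorem stmt_7 (a₁ b₁ c₁ a₂ b₂ c₂ a₃ b₃ c₃ : ℝ) :
    (∀ u v w : ℝ, u + v + w = 0 →
      (quadAnsatz a₂ b₂ c₂ v - quadAnsatz a₃ b₃ c₃ w) * deriv (quadAnsatz a₁ b₁ c₁) u
        + (quadAnsatz a₁ b₁ c₁ u - quadAnsatz a₃ b₃ c₃ w) * deriv (quadAnsatz a₂ b₂ c₂) v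
        - (quadAnsatz a₁ b₁ c₁ u + quadAnsatz a₂ b₂ c₂ v) * deriv (quadAnsatz a₃ b₃ c₃) w
        = 0)
    ↔ (a₁ * (b₂ - b₃) + a₂ * (b₁ - b₃) - a₃ * (b₁ + b₂) = 0 ∧
       b₁ * b₂ + b₂ * b₃ + 2 * c₁ * (a₂ - a₃) + 2 * c₃ * (a₁ + a₂) = 0 ∧
       b₁ * b₂ + b₁ * b₃ + 2 * c₂ * (a₁ - a₃) + 2 * c₃ * (a₁ + a₂) = 0 ∧
       c₁ * (b₂ + b₃) + c₃ * (b₁ - b₂) = 0 ∧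
       c₂ * (b₁ + b₃) - c₃ * (b₁ - b₂) = 0 ∧
       c₁ * c₂ - c₁ * c₃ - c₂ * c₃ = 0) := by
  have on_plane : ∀ P : ℝ → ℝ → ℝ → Prop,
      (∀ u v w : ℝ, u + v + w = 0 → P u v w) ↔ ∀ u v : ℝ, P u v (-u - v) := fun P =>
    ⟨fun h u v => h u v _ (by ring), fun h u v w huvw => by
      obtain rfl : w = -u - v := by linarith
      exact h u v⟩
  rw [on_plane]
  simp only [quadAnsatz_zmc_on_plane]
  exact forall_combination_eq_zero_iff ..
end

section
/- Let c₁, c₂, c₃ > 0 satisfy c₁c₂ = c₁c₃ + c₂c₃, let ε₁, ε₂, ε₃ ∈ {−1, 1}, and define F(x,y,z) = ε₁e^{√c₁·x} + ε₂e^{√c₂·y} + ε₃e^{√c₃·z}. Then for every (x,y,z) ∈ ℝ³ with F(x,y,z) = 0: (i) E[F](x,y,z) = 0 (the surface {F = 0} has zero mean curvature), and (ii) F_x² + F_y² − F_z² = (c₁ε₁e^{√c₁·x} − c₂ε₂e^{√c₂·y})²/(c₁ + c₂) ≥ 0, so the surface is timelike except where c₁ε₁e^{√c₁·x} = c₂ε₂e^{√c₂·y}.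 -/
/-- Partial derivative with respect to the first variable. -/
noncomputable def px (F : ℝ → ℝ → ℝ → ℝ) (x y z : ℝ) : ℝ := deriv (fun t => F t y z) x

/-- Partial derivative with respect to the second variable. -/
noncomputable def py (F : ℝ → ℝ → ℝ → ℝ) (x y z : ℝ) : ℝ := deriv (fun t => F x t z) y

/-- Partial derivative with respect to the third variable. -/
noncomputable def pz (F : ℝ → ℝ → ℝ → ℝ) (x y z : ℝ) : ℝ := deriv (fun t => F x y t) z

/-- The zero mean curvature expression `E[F]` for a level surface `{F = 0}` in
Lorentz–Minkowski space `𝕃³ = (ℝ³, dx² + dy² − dz²)`: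
`E[F] = −(F_x² + F_y² − F_z²)(F_xx + F_yy − F_zz) + F_x²F_xx + F_y²F_yy + F_z²F_zz
        + 2F_xF_yF_xy − 2F_xF_zF_xz − 2F_yF_zF_yz`. -/
noncomputable def Eop (F : ℝ → ℝ → ℝ → ℝ) (x y z : ℝ) : ℝ :=
  -(px F x y z ^ 2 + py F x y z ^ 2 - pz F x y z ^ 2) *
      (px (px F) x y z + py (py F) x y z - pz (pz F) x y z)
    + px F x y z ^ 2 * px (px F) x y z
    + py F x y z ^ 2 * py (py F) x y z
    + pz F x y z ^ 2 * pz (pz F) x y z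
    + 2 * px F x y z * py F x y z * py (px F) x y z
    - 2 * px F x y z * pz F x y z * pz (px F) x y z
    - 2 * py F x y z * pz F x y z * pz (py F) x y z

/-!
`F` is a sum `f(x) + g(y) + h(z)` of one-variable functions, so its mixed partials vanish and
`E[F]` only involves `f', f'', g', g'', h', h''`. Each summand `u = εᵢe^{√cᵢ t}` satisfies
`u'² = cᵢu²` and `u'' = cᵢu`, so `E[F]` and `F_x² + F_y² − F_z²` are polynomials in the values
`a, b, c` of the three summands. On the surface `a + b + c = 0`, and eliminating `c` and `c₃`
by means of `c₃(c₁ + c₂) = c₁c₂` turns both claims into polynomial identities.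
-/

section Separable

variable {F : ℝ → ℝ → ℝ → ℝ} {f g h : ℝ → ℝ}

lemma px_eq_deriv_of_separable (hF : ∀ x y z, F x y z = f x + g y + h z) (x y z : ℝ) :
    px F x y z = deriv f x := by
  simp only [px, hF, deriv_add_const]

lemma py_eq_deriv_of_separable (hF : ∀ x y z, F x y z = f x + g y + h z) (x y z : ℝ) :
    py F x y z = deriv g y := by
  simp only [py, hF, deriv_add_const, deriv_const_add]

lemma pz_eq_deriv_of_separable (hF : ∀ x y z, F x y z = f x + g y + h z) (x y z : ℝ) :
    pz F x y z = deriv h z := by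
  simp only [pz, hF, deriv_const_add]

lemma Eop_of_separable (hF : ∀ x y z, F x y z = f x + g y + h z) (x y z : ℝ) :
    Eop F x y z =
      -(deriv g y ^ 2 - deriv h z ^ 2) * deriv (deriv f) x
        - (deriv f x ^ 2 - deriv h z ^ 2) * deriv (deriv g) y
        + (deriv f x ^ 2 + deriv g y ^ 2) * deriv (deriv h) z := by
  have hFx : ∀ x y z, px F x y z = deriv f x + (fun _ => 0) y + (fun _ => 0) z := by
    simp [px_eq_deriv_of_separable hF]
  have hFy : ∀ x y z, py F x y z = (fun _ => 0) x + deriv g y + (fun _ => 0) z := by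
    simp [py_eq_deriv_of_separable hF]
  have hFz : ∀ x y z, pz F x y z = (fun _ => 0) x + (fun _ => 0) y + deriv h z := by
    simp [pz_eq_deriv_of_separable hF]
  simp only [Eop, px_eq_deriv_of_separable hF, py_eq_deriv_of_separable hF,
    pz_eq_deriv_of_separable hF, px_eq_deriv_of_separable hFx, py_eq_deriv_of_separable hFx,
    pz_eq_deriv_of_separable hFx, py_eq_deriv_of_separable hFy, pz_eq_deriv_of_separable hFy,
    pz_eq_deriv_of_separable hFz, deriv_const']
  ring

end Separable

lemma deriv_const_mul_exp_mul (ε k : ℝ) :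
    deriv (fun t => ε * Real.exp (k * t)) = fun t => k * (ε * Real.exp (k * t)) := by
  funext t
  exact ((((hasDerivAt_id t).const_mul k).exp).const_mul ε).deriv.trans (by dsimp only [id]; ring)

lemma deriv_deriv_const_mul_exp_sqrt_mul {c : ℝ} (hc : 0 ≤ c) (ε t : ℝ) :
    deriv (deriv fun t => ε * Real.exp (√c * t)) t = c * (ε * Real.exp (√c * t)) := by
  rw [deriv_const_mul_exp_mul, deriv_const_mul_field', deriv_const_mul_exp_mul]
  dsimp only
  rw [← mul_assoc, Real.mul_self_sqrt hc]

lemma sq_deriv_const_mul_exp_sqrt_mul {c : ℝ} (hc : 0 ≤ c) (ε t : ℝ) :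
    deriv (fun t => ε * Real.exp (√c * t)) t ^ 2 = c * (ε * Real.exp (√c * t)) ^ 2 := by
  rw [deriv_const_mul_exp_mul, mul_pow, Real.sq_sqrt hc]

section Algebra

variable {c₁ c₂ c₃ a b c : ℝ}

lemma zero_mean_curvature_identity (hc : c₁ * c₂ = c₁ * c₃ + c₂ * c₃) (habc : a + b + c = 0) :
    -(c₂ * b ^ 2 - c₃ * c ^ 2) * (c₁ * a) - (c₁ * a ^ 2 - c₃ * c ^ 2) * (c₂ * b)
      + (c₁ * a ^ 2 + c₂ * b ^ 2) * (c₃ * c) = 0 := by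
  obtain rfl : c = -a - b := by linarith
  linear_combination (-a * b * (a + b)) * hc

lemma lorentz_norm_identity (hc₁₂ : c₁ + c₂ ≠ 0) (hc : c₁ * c₂ = c₁ * c₃ + c₂ * c₃)
    (habc : a + b + c = 0) :
    c₁ * a ^ 2 + c₂ * b ^ 2 - c₃ * c ^ 2 = (c₁ * a - c₂ * b) ^ 2 / (c₁ + c₂) := by
  obtain rfl : c = -a - b := by linarith
  rw [eq_div_iff hc₁₂]
  linear_combination (a + b) ^ 2 * hc

end Algebra

theorem stmt_10_general (c₁ c₂ c₃ : ℝ) (hc₁ : 0 < c₁) (hc₂ : 0 < c₂) (hc₃ : 0 < c₃)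
    (hc : c₁ * c₂ = c₁ * c₃ + c₂ * c₃)
    (ε₁ ε₂ ε₃ : ℝ)
    (F : ℝ → ℝ → ℝ → ℝ)
    (hF : ∀ x y z : ℝ, F x y z =
      ε₁ * Real.exp (Real.sqrt c₁ * x) + ε₂ * Real.exp (Real.sqrt c₂ * y)
        + ε₃ * Real.exp (Real.sqrt c₃ * z)) :
    ∀ x y z : ℝ, F x y z = 0 →
      Eop F x y z = 0 ∧
      px F x y z ^ 2 + py F x y z ^ 2 - pz F x y z ^ 2
        = (c₁ * ε₁ * Real.exp (Real.sqrt c₁ * x)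
            - c₂ * ε₂ * Real.exp (Real.sqrt c₂ * y)) ^ 2 / (c₁ + c₂) ∧
      0 ≤ px F x y z ^ 2 + py F x y z ^ 2 - pz F x y z ^ 2 := by
  intro x y z hF0
  have habc := hF x y z ▸ hF0
  have hnorm : px F x y z ^ 2 + py F x y z ^ 2 - pz F x y z ^ 2
      = (c₁ * ε₁ * Real.exp (Real.sqrt c₁ * x)
          - c₂ * ε₂ * Real.exp (Real.sqrt c₂ * y)) ^ 2 / (c₁ + c₂) := by
    rw [px_eq_deriv_of_separable hF, py_eq_deriv_of_separable hF, pz_eq_deriv_of_separable hF,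
      sq_deriv_const_mul_exp_sqrt_mul hc₁.le, sq_deriv_const_mul_exp_sqrt_mul hc₂.le,
      sq_deriv_const_mul_exp_sqrt_mul hc₃.le, lorentz_norm_identity (by positivity) hc habc,
      mul_assoc, mul_assoc]
  refine ⟨?_, hnorm, hnorm ▸ by positivity⟩
  rw [Eop_of_separable hF, deriv_deriv_const_mul_exp_sqrt_mul hc₁.le,
    deriv_deriv_const_mul_exp_sqrt_mul hc₂.le, deriv_deriv_const_mul_exp_sqrt_mul hc₃.le,
    sq_deriv_const_mul_exp_sqrt_mul hc₁.le, sq_deriv_const_mul_exp_sqrt_mul hc₂.le,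
    sq_deriv_const_mul_exp_sqrt_mul hc₃.le]
  exact zero_mean_curvature_identity hc habc

/-- For `c₁, c₂, c₃ > 0` with `c₁c₂ = c₁c₃ + c₂c₃` and signs `εᵢ ∈ {−1,1}`, the separable
surface `ε₁e^{√c₁x} + ε₂e^{√c₂y} + ε₃e^{√c₃z} = 0` has zero mean curvature, and
`F_x² + F_y² − F_z² = (c₁ε₁e^{√c₁x} − c₂ε₂e^{√c₂y})²/(c₁+c₂) ≥ 0`: the surface is timelike
except where `c₁ε₁e^{√c₁x} = c₂ε₂e^{√c₂y}`. -/
theorem stmt_10 (c₁ c₂ c₃ : ℝ) (hc₁ : 0 < c₁) (hc₂ : 0 < c₂) (hc₃ : 0 < c₃)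
    (hc : c₁ * c₂ = c₁ * c₃ + c₂ * c₃)
    (ε₁ ε₂ ε₃ : ℝ) (hε₁ : ε₁ = 1 ∨ ε₁ = -1) (hε₂ : ε₂ = 1 ∨ ε₂ = -1)
    (hε₃ : ε₃ = 1 ∨ ε₃ = -1)
    (F : ℝ → ℝ → ℝ → ℝ)
    (hF : ∀ x y z : ℝ, F x y z =
      ε₁ * Real.exp (Real.sqrt c₁ * x) + ε₂ * Real.exp (Real.sqrt c₂ * y)
        + ε₃ * Real.exp (Real.sqrt c₃ * z)) :
    ∀ x y z : ℝ, F x y z = 0 →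
      Eop F x y z = 0 ∧
      px F x y z ^ 2 + py F x y z ^ 2 - pz F x y z ^ 2
        = (c₁ * ε₁ * Real.exp (Real.sqrt c₁ * x)
            - c₂ * ε₂ * Real.exp (Real.sqrt c₂ * y)) ^ 2 / (c₁ + c₂) ∧
      0 ≤ px F x y z ^ 2 + py F x y z ^ 2 - pz F x y z ^ 2 :=
  stmt_10_general c₁ c₂ c₃ hc₁ hc₂ hc₃ hc ε₁ ε₂ ε₃ F hF
end

section
/- Let α, β be real numbers with β ≠ 0 and α² − β² = 1, and define F(x,y,z) = sin(αβx) + β²sin(αy) + α²sin(βz). Then for every (x,y,z) ∈ ℝ³ with F(x,y,z) = 0: (i) E[F](x,y,z) = 0 (the surface {F = 0} has zero mean curvature), and (ii) F_x² + F_y² − F_z² = −β⁴(sin(αβx) − sin(αy))² ≤ 0, so the surface is spacelike except where sin(αβx) = sin(αy). -/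
lemma L1 (a c K x : ℝ) : deriv (fun t => a * Real.sin (c * t) + K) x = a * c * Real.cos (c * x) := by
  have h : HasDerivAt (fun t => a * Real.sin (c * t) + K) (a * (Real.cos (c * x) * (c * 1))) x := by
    exact (((Real.hasDerivAt_sin (c * x)).comp x ((hasDerivAt_id x).const_mul c)).const_mul a).add_const K
  rw [h.deriv]; ring

lemma L2 (a c x : ℝ) : deriv (fun t => a * Real.cos (c * t)) x = -(a * c * Real.sin (c * x)) := by
  have h : HasDerivAt (fun t => a * Real.cos (c * t)) (a * (-Real.sin (c * x) * (c * 1))) x := by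
    exact ((Real.hasDerivAt_cos (c * x)).comp x ((hasDerivAt_id x).const_mul c)).const_mul a
  rw [h.deriv]; ring

/-- For `β ≠ 0`, `α² − β² = 1`, the surface `sin(αβx) + β²sin(αy) + α²sin(βz) = 0` has zero
mean curvature, and `F_x² + F_y² − F_z² = −β⁴(sin(αβx) − sin(αy))² ≤ 0`: it is spacelike
except where `sin(αβx) = sin(αy)`. -/
theorem stmt_11 (α β : ℝ) (hβ : β ≠ 0) (hαβ : α ^ 2 - β ^ 2 = 1)
    (F : ℝ → ℝ → ℝ → ℝ)
    (hF : ∀ x y z : ℝ, F x y z =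
      Real.sin (α * β * x) + β ^ 2 * Real.sin (α * y) + α ^ 2 * Real.sin (β * z)) :
    ∀ x y z : ℝ, F x y z = 0 →
      Eop F x y z = 0 ∧
      px F x y z ^ 2 + py F x y z ^ 2 - pz F x y z ^ 2
        = -(β ^ 4 * (Real.sin (α * β * x) - Real.sin (α * y)) ^ 2) ∧
      px F x y z ^ 2 + py F x y z ^ 2 - pz F x y z ^ 2 ≤ 0 := by
  have hpx : ∀ x y z : ℝ, px F x y z = α * β * Real.cos (α * β * x) := by
    intro x y z
    unfold px
    rw [show (fun t => F t y z)
        = fun t => 1 * Real.sin ((α * β) * t) + (β ^ 2 * Real.sin (α * y) + α ^ 2 * Real.sin (β * z)) from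
      funext fun t => by rw [hF]; ring_nf]
    rw [L1]; try ring
  have hpy : ∀ x y z : ℝ, py F x y z = β ^ 2 * α * Real.cos (α * y) := by
    intro x y z
    unfold py
    rw [show (fun t => F x t z)
        = fun t => β ^ 2 * Real.sin (α * t) + (Real.sin (α * β * x) + α ^ 2 * Real.sin (β * z)) from
      funext fun t => by rw [hF]; ring]
    rw [L1]; try ring
  have hpz : ∀ x y z : ℝ, pz F x y z = α ^ 2 * β * Real.cos (β * z) := by
    intro x y z
    unfold pz
    rw [show (fun t => F x y t)
        = fun t => α ^ 2 * Real.sin (β * t) + (Real.sin (α * β * x) + β ^ 2 * Real.sin (α * y)) from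
      funext fun t => by rw [hF]; ring]
    rw [L1]; try ring
  have hpxx : ∀ x y z : ℝ, px (px F) x y z = -(α * β * (α * β) * Real.sin (α * β * x)) := by
    intro x y z
    show deriv (fun t => px F t y z) x = _
    rw [show (fun t => px F t y z) = fun t => (α * β) * Real.cos ((α * β) * t) from
      funext fun t => by rw [hpx]]
    rw [L2]; try ring
  have hpyy : ∀ x y z : ℝ, py (py F) x y z = -(β ^ 2 * α * α * Real.sin (α * y)) := by
    intro x y z
    show deriv (fun t => py F x t z) y = _
    rw [show (fun t => py F x t z) = fun t => (β ^ 2 * α) * Real.cos (α * t) from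
      funext fun t => by rw [hpy]]
    rw [L2]; try ring
  have hpzz : ∀ x y z : ℝ, pz (pz F) x y z = -(α ^ 2 * β * β * Real.sin (β * z)) := by
    intro x y z
    show deriv (fun t => pz F x y t) z = _
    rw [show (fun t => pz F x y t) = fun t => (α ^ 2 * β) * Real.cos (β * t) from
      funext fun t => by rw [hpz]]
    rw [L2]; try ring
  have hpxy : ∀ x y z : ℝ, py (px F) x y z = 0 := by
    intro x y z
    show deriv (fun t => px F x t z) y = _
    rw [show (fun t => px F x t z) = fun _ => α * β * Real.cos (α * β * x) from
      funext fun t => by rw [hpx]]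
    exact deriv_const _ _
  have hpxz : ∀ x y z : ℝ, pz (px F) x y z = 0 := by
    intro x y z
    show deriv (fun t => px F x y t) z = _
    rw [show (fun t => px F x y t) = fun _ => α * β * Real.cos (α * β * x) from
      funext fun t => by rw [hpx]]
    exact deriv_const _ _
  have hpyz : ∀ x y z : ℝ, pz (py F) x y z = 0 := by
    intro x y z
    show deriv (fun t => py F x y t) z = _
    rw [show (fun t => py F x y t) = fun _ => β ^ 2 * α * Real.cos (α * y) from
      funext fun t => by rw [hpy]]
    exact deriv_const _ _
  intro x y z hF0
  have h0 : Real.sin (α * β * x) + β ^ 2 * Real.sin (α * y) + α ^ 2 * Real.sin (β * z) = 0 := by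
    rw [← hF]; exact hF0
  have hc1 : Real.cos (α * β * x) ^ 2 = 1 - Real.sin (α * β * x) ^ 2 := Real.cos_sq' _
  have hc2 : Real.cos (α * y) ^ 2 = 1 - Real.sin (α * y) ^ 2 := Real.cos_sq' _
  have hc3 : Real.cos (β * z) ^ 2 = 1 - Real.sin (β * z) ^ 2 := Real.cos_sq' _
  set s1 := Real.sin (α * β * x)
  set s2 := Real.sin (α * y)
  set s3 := Real.sin (β * z)
  have hii : px F x y z ^ 2 + py F x y z ^ 2 - pz F x y z ^ 2
      = -(β ^ 4 * (s1 - s2) ^ 2) := by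
    rw [hpx, hpy, hpz]
    linear_combination (α ^ 2 * β ^ 2) * hc1 + (α ^ 2 * β ^ 4) * hc2
      + (-(α ^ 4 * β ^ 2)) * hc3
      + (β ^ 2 * (α ^ 2 * s3 - s1 - β ^ 2 * s2)) * h0
      + (-(α ^ 2 * β ^ 2) - β ^ 2 * (s1 ^ 2 + β ^ 2 * s2 ^ 2)) * hαβ
  refine ⟨?_, hii, ?_⟩
  · unfold Eop
    rw [hpx, hpy, hpz, hpxx, hpyy, hpzz, hpxy, hpxz, hpyz]
    linear_combination (α ^ 4 * β ^ 4 * (s2 - s3)) * hc1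
      + (α ^ 4 * β ^ 6 * (s1 - s3)) * hc2
      + (-(α ^ 6 * β ^ 4) * (s1 + s2)) * hc3
      + (α ^ 2 * β ^ 4 * ((-(α ^ 2) + s1 ^ 2 + β ^ 2 * s2 ^ 2 + s3 * (α ^ 2 * s3 - s1 - β ^ 2 * s2))
          + (s1 + s2 - s3) * (α ^ 2 * s3 - s1 - β ^ 2 * s2))) * h0
      + (α ^ 2 * β ^ 4 * ((s1 ^ 3 + β ^ 2 * s2 ^ 3 - (s1 ^ 2 + β ^ 2 * s2 ^ 2) * s3)
          - (s1 + s2 - s3) * (α ^ 2 + s1 ^ 2 + β ^ 2 * s2 ^ 2))) * hαβ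
  · rw [hii]
    exact neg_nonpos.mpr (by positivity)
end

section
/- Let α, β be real numbers with β ≠ 0 and α² − β² = 1, and define F(x,y,z) = cosh(αβx) + β²cosh(αy) − α²cosh(βz). Then for every (x,y,z) ∈ ℝ³ with F(x,y,z) = 0: (i) E[F](x,y,z) = 0 (the surface {F = 0} has zero mean curvature), and (ii) F_x² + F_y² − F_z² = β⁴(cosh(αβx) − cosh(αy))² ≥ 0, so the surface is timelike except where cosh(αβx) = cosh(αy). -/
/-- For `β ≠ 0`, `α² − β² = 1`, the surface `cosh(αβx) + β²cosh(αy) − α²cosh(βz) = 0` has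
zero mean curvature, and `F_x² + F_y² − F_z² = β⁴(cosh(αβx) − cosh(αy))² ≥ 0`: it is
timelike except where `cosh(αβx) = cosh(αy)`. -/
theorem stmt_12 (α β : ℝ) (hβ : β ≠ 0) (hαβ : α ^ 2 - β ^ 2 = 1)
    (F : ℝ → ℝ → ℝ → ℝ)
    (hF : ∀ x y z : ℝ, F x y z =
      Real.cosh (α * β * x) + β ^ 2 * Real.cosh (α * y) - α ^ 2 * Real.cosh (β * z)) :
    ∀ x y z : ℝ, F x y z = 0 →
      Eop F x y z = 0 ∧
      px F x y z ^ 2 + py F x y z ^ 2 - pz F x y z ^ 2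
        = β ^ 4 * (Real.cosh (α * β * x) - Real.cosh (α * y)) ^ 2 ∧
      0 ≤ px F x y z ^ 2 + py F x y z ^ 2 - pz F x y z ^ 2 := by
  have hpx : ∀ u v w : ℝ, px F u v w = α * β * Real.sinh (α * β * u) := by
    intro u v w
    have hfun : (fun t => F t v w) = fun t => Real.cosh (α * β * t) +
        (β ^ 2 * Real.cosh (α * v) - α ^ 2 * Real.cosh (β * w)) := by
      funext t; rw [hF]; ring
    have hd : HasDerivAt (fun t : ℝ => Real.cosh (α * β * t) +
        (β ^ 2 * Real.cosh (α * v) - α ^ 2 * Real.cosh (β * w)))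
        (Real.sinh (α * β * u) * (α * β * 1)) u :=
      (((hasDerivAt_id u).const_mul (α * β)).cosh).add_const _
    rw [px, hfun, hd.deriv]; ring
  have hpy : ∀ u v w : ℝ, py F u v w = α * β ^ 2 * Real.sinh (α * v) := by
    intro u v w
    have hfun : (fun t => F u t w) = fun t => β ^ 2 * Real.cosh (α * t) +
        (Real.cosh (α * β * u) - α ^ 2 * Real.cosh (β * w)) := by
      funext t; rw [hF]; ring
    have hd : HasDerivAt (fun t : ℝ => β ^ 2 * Real.cosh (α * t) +
        (Real.cosh (α * β * u) - α ^ 2 * Real.cosh (β * w)))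
        (β ^ 2 * (Real.sinh (α * v) * (α * 1))) v :=
      ((((hasDerivAt_id v).const_mul α).cosh).const_mul (β ^ 2)).add_const _
    rw [py, hfun, hd.deriv]; ring
  have hpz : ∀ u v w : ℝ, pz F u v w = -(α ^ 2 * β) * Real.sinh (β * w) := by
    intro u v w
    have hfun : (fun t => F u v t) = fun t => (-(α ^ 2)) * Real.cosh (β * t) +
        (Real.cosh (α * β * u) + β ^ 2 * Real.cosh (α * v)) := by
      funext t; rw [hF]; ring
    have hd : HasDerivAt (fun t : ℝ => (-(α ^ 2)) * Real.cosh (β * t) +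
        (Real.cosh (α * β * u) + β ^ 2 * Real.cosh (α * v)))
        ((-(α ^ 2)) * (Real.sinh (β * w) * (β * 1))) w :=
      ((((hasDerivAt_id w).const_mul β).cosh).const_mul (-(α ^ 2))).add_const _
    rw [pz, hfun, hd.deriv]; ring
  intro x y z hF0
  have hpxx : px (px F) x y z = α ^ 2 * β ^ 2 * Real.cosh (α * β * x) := by
    have hfun : (fun t => px F t y z) = fun t => (α * β) * Real.sinh (α * β * t) := by
      funext t; rw [hpx]
    have hd : HasDerivAt (fun t : ℝ => (α * β) * Real.sinh (α * β * t))
        ((α * β) * (Real.cosh (α * β * x) * (α * β * 1))) x :=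
      (((hasDerivAt_id x).const_mul (α * β)).sinh).const_mul (α * β)
    rw [px, hfun, hd.deriv]; ring
  have hpyy : py (py F) x y z = α ^ 2 * β ^ 2 * Real.cosh (α * y) := by
    have hfun : (fun t => py F x t z) = fun t => (α * β ^ 2) * Real.sinh (α * t) := by
      funext t; rw [hpy]
    have hd : HasDerivAt (fun t : ℝ => (α * β ^ 2) * Real.sinh (α * t))
        ((α * β ^ 2) * (Real.cosh (α * y) * (α * 1))) y :=
      (((hasDerivAt_id y).const_mul α).sinh).const_mul (α * β ^ 2)
    rw [py, hfun, hd.deriv]; ring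
  have hpzz : pz (pz F) x y z = -(α ^ 2 * β ^ 2) * Real.cosh (β * z) := by
    have hfun : (fun t => pz F x y t) = fun t => (-(α ^ 2 * β)) * Real.sinh (β * t) := by
      funext t; rw [hpz]
    have hd : HasDerivAt (fun t : ℝ => (-(α ^ 2 * β)) * Real.sinh (β * t))
        ((-(α ^ 2 * β)) * (Real.cosh (β * z) * (β * 1))) z :=
      (((hasDerivAt_id z).const_mul β).sinh).const_mul (-(α ^ 2 * β))
    rw [pz, hfun, hd.deriv]; ring
  have hpxy : py (px F) x y z = 0 := by
    have hfun : (fun t => px F x t z) = fun _ => α * β * Real.sinh (α * β * x) := by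
      funext t; rw [hpx]
    rw [py, hfun, deriv_const]
  have hpxz : pz (px F) x y z = 0 := by
    have hfun : (fun t => px F x y t) = fun _ => α * β * Real.sinh (α * β * x) := by
      funext t; rw [hpx]
    rw [pz, hfun, deriv_const]
  have hpyz : pz (py F) x y z = 0 := by
    have hfun : (fun t => py F x y t) = fun _ => α * β ^ 2 * Real.sinh (α * y) := by
      funext t; rw [hpy]
    rw [pz, hfun, deriv_const]
  have hF0' : Real.cosh (α * β * x) + β ^ 2 * Real.cosh (α * y)
      - α ^ 2 * Real.cosh (β * z) = 0 := by rw [← hF]; exact hF0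
  have sA : Real.sinh (α * β * x) ^ 2 = Real.cosh (α * β * x) ^ 2 - 1 := Real.sinh_sq _
  have sB : Real.sinh (α * y) ^ 2 = Real.cosh (α * y) ^ 2 - 1 := Real.sinh_sq _
  have sC : Real.sinh (β * z) ^ 2 = Real.cosh (β * z) ^ 2 - 1 := Real.sinh_sq _
  set A := Real.cosh (α * β * x) with hA
  set B := Real.cosh (α * y) with hB
  set C := Real.cosh (β * z) with hC
  have key : px F x y z ^ 2 + py F x y z ^ 2 - pz F x y z ^ 2 = β ^ 4 * (A - B) ^ 2 := by
    rw [hpx, hpy, hpz]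
    linear_combination (α ^ 2 * β ^ 2) * sA + (α ^ 2 * β ^ 4) * sB - (α ^ 4 * β ^ 2) * sC
      + (β ^ 2 * (α ^ 2 * C + A + β ^ 2 * B)) * hF0'
      + (α ^ 2 * β ^ 2 + β ^ 2 * A ^ 2 + β ^ 4 * B ^ 2) * hαβ
  refine ⟨?_, key, key ▸ by positivity⟩
  rw [Eop, hpx, hpy, hpz, hpxx, hpyy, hpzz, hpxy, hpxz, hpyz]
  linear_combination (-(α ^ 4 * β ^ 4) * (B + C)) * sA + (-(α ^ 4 * β ^ 6) * (A + C)) * sB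
    + (α ^ 6 * β ^ 4 * (A + B)) * sC
    + (α ^ 4 * β ^ 4 * (-((A + B) * C + 1 + A * B))) * hF0'
    + (α ^ 4 * β ^ 4 * (-(A + B + (1 + A * B) * C))) * hαβ
end

section
/- Define F(x,y,z) = sinh(x)·sinh(y) − cosh(z). Then for every (x,y,z) ∈ ℝ³ with F(x,y,z) = 0: (i) E[F](x,y,z) = 0 (the surface {sinh x · sinh y = cosh z} has zero mean curvature), and (ii) F_x² + F_y² − F_z² = cosh²(x)·cosh²(y) > 0, so the surface is timelike at every point. -/
/-- The surface `sinh x · sinh y = cosh z` has zero mean curvature and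
`F_x² + F_y² − F_z² = cosh²x · cosh²y > 0` on it: it is timelike at every point. -/
theorem stmt_13 (F : ℝ → ℝ → ℝ → ℝ)
    (hF : ∀ x y z : ℝ, F x y z = Real.sinh x * Real.sinh y - Real.cosh z) :
    ∀ x y z : ℝ, F x y z = 0 →
      Eop F x y z = 0 ∧
      px F x y z ^ 2 + py F x y z ^ 2 - pz F x y z ^ 2
        = Real.cosh x ^ 2 * Real.cosh y ^ 2 ∧
      0 < px F x y z ^ 2 + py F x y z ^ 2 - pz F x y z ^ 2 := by
  have hpx : ∀ x y z : ℝ, px F x y z = Real.cosh x * Real.sinh y := by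
    intro x y z
    have h : (fun t => F t y z) = fun t => Real.sinh t * Real.sinh y - Real.cosh z :=
      funext fun t => hF t y z
    rw [px, h]
    exact (((Real.hasDerivAt_sinh x).mul_const _).sub_const _).deriv
  have hpy : ∀ x y z : ℝ, py F x y z = Real.sinh x * Real.cosh y := by
    intro x y z
    have h : (fun t => F x t z) = fun t => Real.sinh x * Real.sinh t - Real.cosh z :=
      funext fun t => hF x t z
    rw [py, h]
    have := (((Real.hasDerivAt_sinh y).const_mul (Real.sinh x)).sub_const (Real.cosh z)).deriv
    simpa using this
  have hpz : ∀ x y z : ℝ, pz F x y z = -Real.sinh z := by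
    intro x y z
    have h : (fun t => F x y t) = fun t => Real.sinh x * Real.sinh y - Real.cosh t :=
      funext fun t => hF x y t
    rw [pz, h]
    have := ((Real.hasDerivAt_cosh z).const_sub (Real.sinh x * Real.sinh y)).deriv
    simpa using this
  have hpxx : ∀ x y z : ℝ, px (px F) x y z = Real.sinh x * Real.sinh y := by
    intro x y z
    have h : (fun t => px F t y z) = fun t => Real.cosh t * Real.sinh y :=
      funext fun t => hpx t y z
    rw [px, h]
    exact ((Real.hasDerivAt_cosh x).mul_const _).deriv
  have hpyy : ∀ x y z : ℝ, py (py F) x y z = Real.sinh x * Real.sinh y := by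
    intro x y z
    have h : (fun t => py F x t z) = fun t => Real.sinh x * Real.cosh t :=
      funext fun t => hpy x t z
    rw [py, h]
    have := ((Real.hasDerivAt_cosh y).const_mul (Real.sinh x)).deriv
    simpa using this
  have hpzz : ∀ x y z : ℝ, pz (pz F) x y z = -Real.cosh z := by
    intro x y z
    have h : (fun t => pz F x y t) = fun t => -Real.sinh t :=
      funext fun t => hpz x y t
    rw [pz, h]
    have := (Real.hasDerivAt_sinh z).neg.deriv
    simpa using this
  have hpxy : ∀ x y z : ℝ, py (px F) x y z = Real.cosh x * Real.cosh y := by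
    intro x y z
    have h : (fun t => px F x t z) = fun t => Real.cosh x * Real.sinh t :=
      funext fun t => hpx x t z
    rw [py, h]
    have := ((Real.hasDerivAt_sinh y).const_mul (Real.cosh x)).deriv
    simpa using this
  have hpxz : ∀ x y z : ℝ, pz (px F) x y z = 0 := by
    intro x y z
    have h : (fun t => px F x y t) = fun _ => Real.cosh x * Real.sinh y :=
      funext fun t => hpx x y t
    rw [pz, h, deriv_const]
  have hpyz : ∀ x y z : ℝ, pz (py F) x y z = 0 := by
    intro x y z
    have h : (fun t => py F x y t) = fun _ => Real.sinh x * Real.cosh y :=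
      funext fun t => hpy x y t
    rw [pz, h, deriv_const]
  intro x y z h0
  rw [hF] at h0
  have hc : Real.cosh z = Real.sinh x * Real.sinh y := by linarith
  have hs2 : Real.sinh z ^ 2 = (Real.sinh x * Real.sinh y) ^ 2 - 1 := by
    have h1 : (Real.sinh x * Real.sinh y) ^ 2 - Real.sinh z ^ 2 = 1 := by
      rw [← hc]; exact Real.cosh_sq_sub_sinh_sq z
    linarith
  have hsq : px F x y z ^ 2 + py F x y z ^ 2 - pz F x y z ^ 2
      = Real.cosh x ^ 2 * Real.cosh y ^ 2 := by
    rw [hpx, hpy, hpz]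
    have hx := Real.cosh_sq x
    have hy := Real.cosh_sq y
    nlinarith
  refine ⟨?_, hsq, ?_⟩
  · rw [Eop, hpx, hpy, hpz, hpxx, hpyy, hpzz, hpxy, hpxz, hpyz]
    simp only [neg_sq]
    rw [hs2, hc]
    linear_combination (2 * Real.sinh x * Real.sinh y * (Real.cosh y ^ 2 - Real.sinh y ^ 2)) *
        Real.cosh_sq x + (2 * Real.sinh x * Real.sinh y) * Real.cosh_sq y
  · rw [hsq]
    positivity
end

section
/- Define F(x,y,z) = sinh(x)·cosh(y) − sinh(z). Then for every (x,y,z) ∈ ℝ³ with F(x,y,z) = 0: (i) E[F](x,y,z) = 0 (the surface {sinh x · cosh y = sinh z}, the timelike Scherk surface of second kind, has zero mean curvature), and (ii) F_x² + F_y² − F_z² = cosh²(x)·sinh²(y) ≥ 0, with equality exactly when y = 0; hence the surface is timelike except along the set {y = 0}. -/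
lemma px_scherk (F : ℝ → ℝ → ℝ → ℝ)
    (hF : ∀ x y z : ℝ, F x y z = Real.sinh x * Real.cosh y - Real.sinh z) :
    ∀ x y z : ℝ, px F x y z = Real.cosh x * Real.cosh y := by
  intro x y z
  unfold px
  simp only [hF]
  exact (((Real.hasDerivAt_sinh x).mul_const _).sub_const _).deriv

lemma py_scherk (F : ℝ → ℝ → ℝ → ℝ)
    (hF : ∀ x y z : ℝ, F x y z = Real.sinh x * Real.cosh y - Real.sinh z) :
    ∀ x y z : ℝ, py F x y z = Real.sinh x * Real.sinh y := by
  intro x y z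
  unfold py
  simp only [hF]
  exact (((Real.hasDerivAt_cosh y).const_mul _).sub_const _).deriv

lemma pz_scherk (F : ℝ → ℝ → ℝ → ℝ)
    (hF : ∀ x y z : ℝ, F x y z = Real.sinh x * Real.cosh y - Real.sinh z) :
    ∀ x y z : ℝ, pz F x y z = -Real.cosh z := by
  intro x y z
  unfold pz
  simp only [hF]
  have := ((hasDerivAt_const z (Real.sinh x * Real.cosh y)).sub
    (Real.hasDerivAt_sinh z)).deriv
  simpa using this

/-- The timelike Scherk surface of second kind `sinh x · cosh y = sinh z` has zero mean
curvature and `F_x² + F_y² − F_z² = cosh²x · sinh²y ≥ 0`, with equality exactly when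
`y = 0`: it is timelike except along `{y = 0}`. -/
theorem stmt_14 (F : ℝ → ℝ → ℝ → ℝ)
    (hF : ∀ x y z : ℝ, F x y z = Real.sinh x * Real.cosh y - Real.sinh z) :
    ∀ x y z : ℝ, F x y z = 0 →
      Eop F x y z = 0 ∧
      px F x y z ^ 2 + py F x y z ^ 2 - pz F x y z ^ 2
        = Real.cosh x ^ 2 * Real.sinh y ^ 2 ∧
      0 ≤ px F x y z ^ 2 + py F x y z ^ 2 - pz F x y z ^ 2 ∧
      (px F x y z ^ 2 + py F x y z ^ 2 - pz F x y z ^ 2 = 0 ↔ y = 0) := by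
  intro x y z hxyz
  have hs : Real.sinh x * Real.cosh y = Real.sinh z := by
    have := hF x y z; rw [this] at hxyz; linarith
  have hpx := px_scherk F hF
  have hpy := py_scherk F hF
  have hpz := pz_scherk F hF
  have hpxx : px (px F) x y z = Real.sinh x * Real.cosh y := by
    show deriv (fun t => px F t y z) x = _
    simp only [hpx]
    exact ((Real.hasDerivAt_cosh x).mul_const _).deriv
  have hpyy : py (py F) x y z = Real.sinh x * Real.cosh y := by
    show deriv (fun t => py F x t z) y = _
    simp only [hpy]
    exact ((Real.hasDerivAt_sinh y).const_mul _).deriv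
  have hpzz : pz (pz F) x y z = -Real.sinh z := by
    show deriv (fun t => pz F x y t) z = _
    simp only [hpz]
    have := ((Real.hasDerivAt_cosh z).const_mul (-1 : ℝ)).deriv
    simpa using this
  have hpxy : py (px F) x y z = Real.cosh x * Real.sinh y := by
    show deriv (fun t => px F x t z) y = _
    simp only [hpx]
    exact ((Real.hasDerivAt_cosh y).const_mul _).deriv
  have hpxz : pz (px F) x y z = 0 := by
    show deriv (fun t => px F x y t) z = _
    simp only [hpx]
    exact deriv_const z _
  have hpyz : pz (py F) x y z = 0 := by
    show deriv (fun t => py F x y t) z = _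
    simp only [hpy]
    exact deriv_const z _
  have hcy : Real.cosh y ^ 2 = 1 + Real.sinh y ^ 2 := by
    have := Real.cosh_sq_sub_sinh_sq y; linarith
  have hcx : Real.cosh x ^ 2 = 1 + Real.sinh x ^ 2 := by
    have := Real.cosh_sq_sub_sinh_sq x; linarith
  have hcz : Real.cosh z ^ 2 = 1 + Real.sinh z ^ 2 := by
    have := Real.cosh_sq_sub_sinh_sq z; linarith
  have hmetric : px F x y z ^ 2 + py F x y z ^ 2 - pz F x y z ^ 2
      = Real.cosh x ^ 2 * Real.sinh y ^ 2 := by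
    rw [hpx, hpy, hpz]
    have h1 : Real.cosh z ^ 2 = 1 + (Real.sinh x * Real.cosh y) ^ 2 := by
      rw [hcz, ← hs]
    linear_combination -h1 + (Real.cosh y ^ 2 - Real.sinh y ^ 2) * hcx + hcy
  refine ⟨?_, hmetric, ?_, ?_⟩
  · unfold Eop
    rw [hpx, hpy, hpz, hpxx, hpyy, hpzz, hpxy, hpxz, hpyz, ← hs]
    have h1 : Real.cosh z ^ 2 = 1 + (Real.sinh x * Real.cosh y) ^ 2 := by
      rw [hcz, ← hs]
    linear_combination (2 * Real.sinh x * Real.cosh y) * h1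
      - (2 * Real.sinh x * Real.cosh y) * (Real.cosh y ^ 2 - Real.sinh y ^ 2) * hcx
      - (2 * Real.sinh x * Real.cosh y) * hcy
  · rw [hmetric]; positivity
  · rw [hmetric]
    constructor
    · intro h
      have hc : Real.cosh x ≠ 0 := ne_of_gt (Real.cosh_pos x)
      have : Real.sinh y ^ 2 = 0 := by
        rcases mul_eq_zero.mp h with h' | h'
        · exact absurd (pow_eq_zero_iff (by norm_num) |>.mp h') hc
        · exact h'
      have : Real.sinh y = 0 := by
        exact pow_eq_zero_iff (by norm_num) |>.mp this
      exact Real.sinh_eq_zero.mp this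
    · rintro rfl; simp
end

section
/- Define F(x,y,z) = cosh(x)·cosh(y) − cosh(z). Then for every (x,y,z) ∈ ℝ³ with F(x,y,z) = 0: (i) E[F](x,y,z) = 0 (the surface {cosh x · cosh y = cosh z}, the timelike Scherk surface of first kind, has zero mean curvature), and (ii) F_x² + F_y² − F_z² = sinh²(x)·sinh²(y) ≥ 0, with equality exactly when x = 0 or y = 0; hence the surface is timelike except along the set {x = 0} ∪ {y = 0}. -/
/-- The timelike Scherk surface of first kind `cosh x · cosh y = cosh z` has zero mean
curvature and `F_x² + F_y² − F_z² = sinh²x · sinh²y ≥ 0`, with equality exactly when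
`x = 0` or `y = 0`: it is timelike except along `{x = 0} ∪ {y = 0}`. -/
theorem stmt_15 (F : ℝ → ℝ → ℝ → ℝ)
    (hF : ∀ x y z : ℝ, F x y z = Real.cosh x * Real.cosh y - Real.cosh z) :
    ∀ x y z : ℝ, F x y z = 0 →
      Eop F x y z = 0 ∧
      px F x y z ^ 2 + py F x y z ^ 2 - pz F x y z ^ 2
        = Real.sinh x ^ 2 * Real.sinh y ^ 2 ∧
      0 ≤ px F x y z ^ 2 + py F x y z ^ 2 - pz F x y z ^ 2 ∧
      (px F x y z ^ 2 + py F x y z ^ 2 - pz F x y z ^ 2 = 0 ↔ x = 0 ∨ y = 0) := by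

  intro x y z h0
  have hz : Real.cosh x * Real.cosh y = Real.cosh z := by
    have := hF x y z; rw [this] at h0; linarith
  have hpx : ∀ a b c : ℝ, px F a b c = Real.sinh a * Real.cosh b := by
    intro a b c
    have he : (fun t => F t b c) = fun t => Real.cosh t * Real.cosh b - Real.cosh c :=
      funext fun t => hF t b c
    rw [px, he]
    simp
  have hpy : ∀ a b c : ℝ, py F a b c = Real.cosh a * Real.sinh b := by
    intro a b c
    have he : (fun t => F a t c) = fun t => Real.cosh a * Real.cosh t - Real.cosh c :=
      funext fun t => hF a t c
    rw [py, he]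
    simp
  have hpz : ∀ a b c : ℝ, pz F a b c = -Real.sinh c := by
    intro a b c
    have he : (fun t => F a b t) = fun t => Real.cosh a * Real.cosh b - Real.cosh t :=
      funext fun t => hF a b t
    rw [pz, he]
    simp
  have hpxx : px (px F) x y z = Real.cosh x * Real.cosh y := by
    have he : (fun t => px F t y z) = fun t => Real.sinh t * Real.cosh y :=
      funext fun t => hpx t y z
    rw [px, he]; simp
  have hpyy : py (py F) x y z = Real.cosh x * Real.cosh y := by
    have he : (fun t => py F x t z) = fun t => Real.cosh x * Real.sinh t :=
      funext fun t => hpy x t z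
    rw [py, he]; simp
  have hpzz : pz (pz F) x y z = -Real.cosh z := by
    have he : (fun t => pz F x y t) = fun t => -Real.sinh t :=
      funext fun t => hpz x y t
    rw [pz, he]; simp
  have hpxy : py (px F) x y z = Real.sinh x * Real.sinh y := by
    have he : (fun t => px F x t z) = fun t => Real.sinh x * Real.cosh t :=
      funext fun t => hpx x t z
    rw [py, he]; simp
  have hpxz : pz (px F) x y z = 0 := by
    have he : (fun t => px F x y t) = fun _ => Real.sinh x * Real.cosh y :=
      funext fun t => hpx x y t
    rw [pz, he]; simp
  have hpyz : pz (py F) x y z = 0 := by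
    have he : (fun t => py F x y t) = fun _ => Real.cosh x * Real.sinh y :=
      funext fun t => hpy x y t
    rw [pz, he]; simp
  have cx : Real.cosh x ^ 2 = Real.sinh x ^ 2 + 1 := by
    have := Real.cosh_sq_sub_sinh_sq x; nlinarith
  have cy : Real.cosh y ^ 2 = Real.sinh y ^ 2 + 1 := by
    have := Real.cosh_sq_sub_sinh_sq y; nlinarith
  have cz : Real.cosh z ^ 2 = Real.sinh z ^ 2 + 1 := by
    have := Real.cosh_sq_sub_sinh_sq z; nlinarith
  have sz2 : Real.sinh z ^ 2 = Real.cosh x ^ 2 * Real.cosh y ^ 2 - 1 := by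
    linear_combination (-1) * cz - (Real.cosh x * Real.cosh y + Real.cosh z) * hz
  have key : px F x y z ^ 2 + py F x y z ^ 2 - pz F x y z ^ 2
      = Real.sinh x ^ 2 * Real.sinh y ^ 2 := by
    rw [hpx, hpy, hpz]
    linear_combination (-1) * sz2 + (Real.sinh x ^ 2 - Real.cosh x ^ 2) * cy + (-1) * cx
  refine ⟨?_, key, ?_, ?_⟩
  · rw [Eop, hpx, hpy, hpz, hpxx, hpyy, hpzz, hpxy, hpxz, hpyz]
    linear_combination
      (Real.sinh x ^ 2 * Real.cosh y ^ 2 + Real.cosh x ^ 2 * Real.sinh y ^ 2) * hz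
      + 2 * Real.cosh x * Real.cosh y * sz2
      + (2 * Real.cosh x * Real.cosh y * (Real.cosh x ^ 2 - Real.sinh x ^ 2)) * cy
      + 2 * Real.cosh x * Real.cosh y * cx
  · rw [key]; positivity
  · rw [key]
    constructor
    · intro h
      rcases mul_eq_zero.1 h with h | h
      · exact Or.inl (Real.sinh_eq_zero.mp (pow_eq_zero_iff two_ne_zero |>.mp h))
      · exact Or.inr (Real.sinh_eq_zero.mp (pow_eq_zero_iff two_ne_zero |>.mp h))
    · rintro (rfl | rfl) <;> simp
end

section
/- Define F(x,y,z) = sin(x)·sin(y) − sin(z). Then for every (x,y,z) ∈ ℝ³ with F(x,y,z) = 0: (i) E[F](x,y,z) = 0 (the surface {sin x · sin y = sin z}, the spacelike Scherk surface, has zero mean curvature), and (ii) F_x² + F_y² − F_z² = −cos²(x)·cos²(y) ≤ 0, with equality exactly when cos(x) = 0 or cos(y) = 0; hence the surface is spacelike except along the set {cos x = 0} ∪ {cos y = 0}. -/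
/-- The spacelike Scherk surface `sin x · sin y = sin z` has zero mean curvature and
`F_x² + F_y² − F_z² = −cos²x · cos²y ≤ 0`, with equality exactly when `cos x = 0` or
`cos y = 0`: it is spacelike except along `{cos x = 0} ∪ {cos y = 0}`. -/
theorem stmt_16 (F : ℝ → ℝ → ℝ → ℝ)
    (hF : ∀ x y z : ℝ, F x y z = Real.sin x * Real.sin y - Real.sin z) :
    ∀ x y z : ℝ, F x y z = 0 →
      Eop F x y z = 0 ∧
      px F x y z ^ 2 + py F x y z ^ 2 - pz F x y z ^ 2
        = -(Real.cos x ^ 2 * Real.cos y ^ 2) ∧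
      px F x y z ^ 2 + py F x y z ^ 2 - pz F x y z ^ 2 ≤ 0 ∧
      (px F x y z ^ 2 + py F x y z ^ 2 - pz F x y z ^ 2 = 0 ↔
        Real.cos x = 0 ∨ Real.cos y = 0) := by
  have hpx : ∀ x y z : ℝ, px F x y z = Real.cos x * Real.sin y := by
    intro x y z
    have : (fun t => F t y z) = fun t => Real.sin t * Real.sin y - Real.sin z := by
      funext t; exact hF t y z
    simp [px, this]
  have hpy : ∀ x y z : ℝ, py F x y z = Real.sin x * Real.cos y := by
    intro x y z
    have : (fun t => F x t z) = fun t => Real.sin x * Real.sin t - Real.sin z := by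
      funext t; exact hF x t z
    simp [py, this]
  have hpz : ∀ x y z : ℝ, pz F x y z = -Real.cos z := by
    intro x y z
    have : (fun t => F x y t) = fun t => Real.sin x * Real.sin y - Real.sin t := by
      funext t; exact hF x y t
    simp [pz, this]
  have hpxx : ∀ x y z : ℝ, px (px F) x y z = -Real.sin x * Real.sin y := by
    intro x y z
    have h : (fun t => px F t y z) = fun t => Real.cos t * Real.sin y := by
      funext t; exact hpx t y z
    rw [show px (px F) x y z = deriv (fun t => px F t y z) x from rfl, h]
    simp
  have hpyy : ∀ x y z : ℝ, py (py F) x y z = -Real.sin x * Real.sin y := by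
    intro x y z
    have h : (fun t => py F x t z) = fun t => Real.sin x * Real.cos t := by
      funext t; exact hpy x t z
    rw [show py (py F) x y z = deriv (fun t => py F x t z) y from rfl, h]
    simp
  have hpzz : ∀ x y z : ℝ, pz (pz F) x y z = Real.sin z := by
    intro x y z
    have h : (fun t => pz F x y t) = fun t => -Real.cos t := by
      funext t; exact hpz x y t
    rw [show pz (pz F) x y z = deriv (fun t => pz F x y t) z from rfl, h]
    simp
  have hpxy : ∀ x y z : ℝ, py (px F) x y z = Real.cos x * Real.cos y := by
    intro x y z
    have h : (fun t => px F x t z) = fun t => Real.cos x * Real.sin t := by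
      funext t; exact hpx x t z
    rw [show py (px F) x y z = deriv (fun t => px F x t z) y from rfl, h]
    simp
  have hpxz : ∀ x y z : ℝ, pz (px F) x y z = 0 := by
    intro x y z
    have h : (fun t => px F x y t) = fun _ => Real.cos x * Real.sin y := by
      funext t; exact hpx x y t
    rw [show pz (px F) x y z = deriv (fun t => px F x y t) z from rfl, h]
    simp
  have hpyz : ∀ x y z : ℝ, pz (py F) x y z = 0 := by
    intro x y z
    have h : (fun t => py F x y t) = fun _ => Real.sin x * Real.cos y := by
      funext t; exact hpy x y t
    rw [show pz (py F) x y z = deriv (fun t => py F x y t) z from rfl, h]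
    simp
  intro x y z h0
  have hs : Real.sin z = Real.sin x * Real.sin y := by
    have := hF x y z; rw [this] at h0; linarith
  have hcz : Real.cos z ^ 2 = 1 - (Real.sin x * Real.sin y) ^ 2 := by
    have := Real.sin_sq_add_cos_sq z
    rw [hs] at this; linarith
  have hQ : px F x y z ^ 2 + py F x y z ^ 2 - pz F x y z ^ 2
      = -(Real.cos x ^ 2 * Real.cos y ^ 2) := by
    rw [hpx, hpy, hpz]
    have hx := Real.sin_sq_add_cos_sq x
    have hy := Real.sin_sq_add_cos_sq y
    nlinarith [hcz]
  refine ⟨?_, hQ, ?_, ?_⟩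
  · unfold Eop
    rw [hpx, hpy, hpz, hpxx, hpyy, hpzz, hpxy, hpxz, hpyz, hs]
    have hx := Real.sin_sq_add_cos_sq x
    have hy := Real.sin_sq_add_cos_sq y
    linear_combination (-2 * Real.sin x * Real.sin y) * hcz
      + (2 * Real.sin x * Real.sin y * (Real.sin y ^ 2 + Real.cos y ^ 2)) * hx
      + (2 * Real.sin x * Real.sin y) * hy
  · rw [hQ]
    have : (0:ℝ) ≤ Real.cos x ^ 2 * Real.cos y ^ 2 := by positivity
    linarith
  · rw [hQ]
    constructor
    · intro h
      have : Real.cos x ^ 2 * Real.cos y ^ 2 = 0 := by linarith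
      rcases mul_eq_zero.mp this with h | h
      · left; exact pow_eq_zero_iff (by norm_num) |>.mp h
      · right; exact pow_eq_zero_iff (by norm_num) |>.mp h
    · rintro (h | h) <;> simp [h]
end

section
/- Define F(x,y,z) = tanh(x)·tanh(y) − tanh(z/√2). Then for every (x,y,z) ∈ ℝ³ with F(x,y,z) = 0, E[F](x,y,z) = 0; that is, the surface {tanh x · tanh y = tanh(z/√2)} has zero mean curvature in Lorentz–Minkowski space. -/
/-!
`F` separates as `f x * g y - h z`, so its mixed partials involving `z` vanish and `E[F]` is an
explicit expression in `f, g, h` and their first two derivatives. For `f = g = tanh` one has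
`tanh' = 1 - tanh²`, and `h = tanh (· / √2)` satisfies `h'² = (1 - h²)² / 2`, `h'' = -h (1 - h²)`;
on the surface `h = tanh x * tanh y`, so `E[F]` becomes a polynomial in `tanh x, tanh y` that
vanishes identically.
-/

lemma hasDerivAt_tanh (x : ℝ) : HasDerivAt Real.tanh (1 - Real.tanh x ^ 2) x := by
  have h := (Real.hasDerivAt_sinh x).div (Real.hasDerivAt_cosh x) (Real.cosh_pos x).ne'
  rw [show Real.sinh / Real.cosh = Real.tanh from
    funext fun t => (Real.tanh_eq_sinh_div_cosh t).symm] at h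
  refine h.congr_deriv ?_
  have hc : Real.cosh x ≠ 0 := (Real.cosh_pos x).ne'
  rw [Real.tanh_eq_sinh_div_cosh]
  field_simp

lemma hasDerivAt_one_sub_tanh_sq (x : ℝ) :
    HasDerivAt (fun t => 1 - Real.tanh t ^ 2) (-2 * Real.tanh x * (1 - Real.tanh x ^ 2)) x := by
  refine (((hasDerivAt_tanh x).fun_pow 2).const_sub 1).congr_deriv ?_
  push_cast
  ring

lemma hasDerivAt_tanh_div_sqrt_two (z : ℝ) :
    HasDerivAt (fun t => Real.tanh (t / √2)) ((1 - Real.tanh (z / √2) ^ 2) / √2) z := by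
  simpa [div_eq_mul_inv, mul_comm, Function.comp_def] using
    (hasDerivAt_tanh (z / √2)).comp z ((hasDerivAt_id z).div_const √2)

lemma hasDerivAt_deriv_tanh_div_sqrt_two (z : ℝ) :
    HasDerivAt (fun t => (1 - Real.tanh (t / √2) ^ 2) / √2)
      (-(Real.tanh (z / √2) * (1 - Real.tanh (z / √2) ^ 2))) z := by
  refine ((((hasDerivAt_tanh_div_sqrt_two z).fun_pow 2).const_sub 1).div_const √2).congr_deriv ?_
  have hsqrt : √2 ^ 2 = 2 := Real.sq_sqrt zero_le_two
  field_simp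
  rw [hsqrt]
  ring

lemma Eop_mul_sub {f f' f'' g g' g'' h h' h'' : ℝ → ℝ}
    (hf : ∀ t, HasDerivAt f (f' t) t) (hf' : ∀ t, HasDerivAt f' (f'' t) t)
    (hg : ∀ t, HasDerivAt g (g' t) t) (hg' : ∀ t, HasDerivAt g' (g'' t) t)
    (hh : ∀ t, HasDerivAt h (h' t) t) (hh' : ∀ t, HasDerivAt h' (h'' t) t) (x y z : ℝ) :
    Eop (fun x y z => f x * g y - h z) x y z =
      -((f x * g' y) ^ 2 - h' z ^ 2) * (f'' x * g y)
        - ((f' x * g y) ^ 2 - h' z ^ 2) * (f x * g'' y)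
        - ((f' x * g y) ^ 2 + (f x * g' y) ^ 2) * h'' z
        + 2 * (f' x * g y) * (f x * g' y) * (f' x * g' y) := by
  have hpx : px (fun x y z => f x * g y - h z) = fun x y _ => f' x * g y := by
    funext x y z; exact (((hf x).mul_const _).sub_const _).deriv
  have hpy : py (fun x y z => f x * g y - h z) = fun x y _ => f x * g' y := by
    funext x y z; exact (((hg y).const_mul _).sub_const _).deriv
  have hpz : pz (fun x y z => f x * g y - h z) = fun _ _ z => -h' z := by
    funext x y z; exact ((hh z).const_sub _).deriv
  rw [Eop, hpx, hpy, hpz]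
  simp only [px, py, pz, deriv_const, ((hf' x).mul_const _).deriv, ((hg' y).const_mul _).deriv,
    ((hg y).const_mul _).deriv, (hh' z).fun_neg.deriv]
  ring

/-- The surface `tanh x · tanh y = tanh(z/√2)` has zero mean curvature in
Lorentz–Minkowski space. -/
theorem stmt_17 (F : ℝ → ℝ → ℝ → ℝ)
    (hF : ∀ x y z : ℝ, F x y z =
      Real.tanh x * Real.tanh y - Real.tanh (z / Real.sqrt 2)) :
    ∀ x y z : ℝ, F x y z = 0 → Eop F x y z = 0 := by
  intro x y z hsurf
  obtain rfl : F = fun x y z => Real.tanh x * Real.tanh y - Real.tanh (z / √2) := by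
    funext x y z; exact hF x y z
  have hz : Real.tanh (z / √2) = Real.tanh x * Real.tanh y := by linarith
  have hderiv_sq : ((1 - Real.tanh (z / √2) ^ 2) / √2) ^ 2 = (1 - Real.tanh (z / √2) ^ 2) ^ 2 / 2 := by
    rw [div_pow, Real.sq_sqrt zero_le_two]
  rw [Eop_mul_sub hasDerivAt_tanh hasDerivAt_one_sub_tanh_sq hasDerivAt_tanh
    hasDerivAt_one_sub_tanh_sq hasDerivAt_tanh_div_sqrt_two hasDerivAt_deriv_tanh_div_sqrt_two,
    hderiv_sq, hz]
  ring
end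

section
/- Define F(x,y,z) = sinh(x) − sin(y)·sinh(z). Then for every (x,y,z) ∈ ℝ³ with F(x,y,z) = 0: (i) E[F](x,y,z) = 0 (the surface {sinh x = sin y · sinh z} has zero mean curvature), and (ii) F_x² + F_y² − F_z² = cos²(y)·cosh²(z) ≥ 0, with equality exactly when cos(y) = 0; hence the surface is timelike except along the set {cos y = 0}. -/
/-! `E[F]` and `F_x² + F_y² − F_z² − cos²y cosh²z` are both multiples of `F` itself, by the
identities `cosh² − sinh² = 1` and `sin² + cos² = 1`; hence both vanish on the surface. -/

open Real

noncomputable def sinhSubSinMulSinh (x y z : ℝ) : ℝ := sinh x - sin y * sinh z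

section sinhSubSinMulSinh

local notation "G" => sinhSubSinMulSinh

lemma px_sinhSubSinMulSinh : px G = fun x _ _ => cosh x := by
  funext x y z
  simp [px, sinhSubSinMulSinh]

lemma py_sinhSubSinMulSinh : py G = fun _ y z => -(cos y * sinh z) := by
  funext x y z
  simp [py, sinhSubSinMulSinh]

lemma pz_sinhSubSinMulSinh : pz G = fun _ y z => -(sin y * cosh z) := by
  funext x y z
  simp [pz, sinhSubSinMulSinh]

lemma px_px_sinhSubSinMulSinh (x y z : ℝ) : px (px G) x y z = sinh x := by
  rw [px_sinhSubSinMulSinh]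
  simp [px]

lemma py_py_sinhSubSinMulSinh (x y z : ℝ) : py (py G) x y z = sin y * sinh z := by
  rw [py_sinhSubSinMulSinh]
  simp [py]

lemma pz_pz_sinhSubSinMulSinh (x y z : ℝ) : pz (pz G) x y z = -(sin y * sinh z) := by
  rw [pz_sinhSubSinMulSinh]
  simp [pz]

lemma py_px_sinhSubSinMulSinh (x y z : ℝ) : py (px G) x y z = 0 := by
  rw [px_sinhSubSinMulSinh]
  simp [py]

lemma pz_px_sinhSubSinMulSinh (x y z : ℝ) : pz (px G) x y z = 0 := by
  rw [px_sinhSubSinMulSinh]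
  simp [pz]

lemma pz_py_sinhSubSinMulSinh (x y z : ℝ) : pz (py G) x y z = -(cos y * cosh z) := by
  rw [py_sinhSubSinMulSinh]
  simp [pz]

lemma lorentzNormSq_grad_sinhSubSinMulSinh (x y z : ℝ) :
    px G x y z ^ 2 + py G x y z ^ 2 - pz G x y z ^ 2
      = cos y ^ 2 * cosh z ^ 2 + G x y z * (sinh x + sin y * sinh z) := by
  rw [px_sinhSubSinMulSinh, py_sinhSubSinMulSinh, pz_sinhSubSinMulSinh, sinhSubSinMulSinh]
  linear_combination cosh_sq_sub_sinh_sq x - (cos y ^ 2 + sin y ^ 2) * cosh_sq_sub_sinh_sq z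
    - sin_sq_add_cos_sq y

lemma Eop_sinhSubSinMulSinh (x y z : ℝ) :
    Eop G x y z = G x y z * (sin y ^ 2 * cosh z ^ 2 - cos y ^ 2 * sinh z ^ 2
      - 2 * sin y * sinh z * (sinh x + sin y * sinh z)) := by
  have hN := lorentzNormSq_grad_sinhSubSinMulSinh x y z
  rw [Eop, px_px_sinhSubSinMulSinh, py_py_sinhSubSinMulSinh, pz_pz_sinhSubSinMulSinh,
    py_px_sinhSubSinMulSinh, pz_px_sinhSubSinMulSinh, pz_py_sinhSubSinMulSinh]
  simp only [px_sinhSubSinMulSinh, py_sinhSubSinMulSinh, pz_sinhSubSinMulSinh,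
    sinhSubSinMulSinh] at hN ⊢
  linear_combination (-2 * sin y * sinh z) * hN

end sinhSubSinMulSinh

lemma cos_sq_mul_cosh_sq_eq_zero_iff (y z : ℝ) : cos y ^ 2 * cosh z ^ 2 = 0 ↔ cos y = 0 := by
  simp [(cosh_pos z).ne']

/-- The surface `sinh x = sin y · sinh z` has zero mean curvature and
`F_x² + F_y² − F_z² = cos²y · cosh²z ≥ 0`, with equality exactly when `cos y = 0`: it is
timelike except along `{cos y = 0}`. -/
theorem stmt_18 (F : ℝ → ℝ → ℝ → ℝ)
    (hF : ∀ x y z : ℝ, F x y z = Real.sinh x - Real.sin y * Real.sinh z) :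
    ∀ x y z : ℝ, F x y z = 0 →
      Eop F x y z = 0 ∧
      px F x y z ^ 2 + py F x y z ^ 2 - pz F x y z ^ 2
        = Real.cos y ^ 2 * Real.cosh z ^ 2 ∧
      0 ≤ px F x y z ^ 2 + py F x y z ^ 2 - pz F x y z ^ 2 ∧
      (px F x y z ^ 2 + py F x y z ^ 2 - pz F x y z ^ 2 = 0 ↔ Real.cos y = 0) := by
  obtain rfl : F = sinhSubSinMulSinh := funext fun x => funext fun y => funext (hF x y)
  intro x y z hG
  have hN := lorentzNormSq_grad_sinhSubSinMulSinh x y z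
  rw [hG, zero_mul, add_zero] at hN
  refine ⟨by rw [Eop_sinhSubSinMulSinh, hG, zero_mul], hN, by rw [hN]; positivity, ?_⟩
  rw [hN, cos_sq_mul_cosh_sq_eq_zero_iff]
end

section
/- Define F(x,y,z) = sin(x) − cosh(y)·sin(z). Then for every (x,y,z) ∈ ℝ³ with F(x,y,z) = 0: (i) E[F](x,y,z) = 0 (the surface {sin x = cosh y · sin z} has zero mean curvature), and (ii) F_x² + F_y² − F_z² = −sinh²(y)·cos²(z) ≤ 0; hence the surface is spacelike except where sinh(y)·cos(z) = 0. -/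
open Real

section Separable

variable (f g h u : ℝ → ℝ)

theorem px_sub_mul : px (fun x y z => f x - g y * h z) = fun x _ _ => deriv f x := by
  ext x y z
  exact deriv_sub_const _

theorem py_sub_mul :
    py (fun x y z => f x - g y * h z) = fun _ y z => -(deriv g y * h z) := by
  ext x y z
  simp only [py, deriv_const_sub, deriv_mul_const_field]

theorem pz_sub_mul :
    pz (fun x y z => f x - g y * h z) = fun _ y z => -(g y * deriv h z) := by
  ext x y z
  simp only [pz, deriv_const_sub, deriv_const_mul_field]

theorem px_fst : px (fun x (_ _ : ℝ) => u x) = fun x _ _ => deriv u x := rfl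

theorem py_fst : py (fun x (_ _ : ℝ) => u x) = 0 := by
  ext x y z
  exact deriv_const _ _

theorem pz_fst : pz (fun x (_ _ : ℝ) => u x) = 0 := by
  ext x y z
  exact deriv_const _ _

theorem py_neg_mul :
    py (fun (_ y z : ℝ) => -(g y * h z)) = fun _ y z => -(deriv g y * h z) := by
  ext x y z
  simp only [py, deriv.fun_neg, deriv_mul_const_field]

theorem pz_neg_mul :
    pz (fun (_ y z : ℝ) => -(g y * h z)) = fun _ y z => -(g y * deriv h z) := by
  ext x y z
  simp only [pz, deriv.fun_neg, deriv_const_mul_field]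

theorem Eop_sub_mul (x y z : ℝ) :
    Eop (fun x y z => f x - g y * h z) x y z =
      -(deriv g y ^ 2 * h z ^ 2 - g y ^ 2 * deriv h z ^ 2) * deriv (deriv f) x
        + (deriv f x ^ 2 - g y ^ 2 * deriv h z ^ 2) * deriv (deriv g) y * h z
        - (deriv f x ^ 2 + deriv g y ^ 2 * h z ^ 2) * g y * deriv (deriv h) z
        + 2 * g y * deriv g y ^ 2 * h z * deriv h z ^ 2 := by
  simp only [Eop, px_sub_mul, py_sub_mul, pz_sub_mul, px_fst, py_fst, pz_fst, py_neg_mul,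
    pz_neg_mul, Pi.zero_apply]
  ring

end Separable

theorem Eop_sin_sub_cosh_mul_sin {x y z : ℝ} (hxyz : sin x = cosh y * sin z) :
    Eop (fun x y z => sin x - cosh y * sin z) x y z = 0 := by
  simp only [Eop_sub_mul, Real.deriv_sin, Real.deriv_cos', Real.deriv_cosh, Real.deriv_sinh]
  rw [cos_sq' x, hxyz]
  -- what remains is `2 cosh y sin z (1 - (cosh² y - sinh² y)(sin² z + cos² z))`
  linear_combination -2 * cosh y * sin z * (sin z ^ 2 + cos z ^ 2) * cosh_sq_sub_sinh_sq y
    - 2 * cosh y * sin z * sin_sq_add_cos_sq z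

theorem px_sq_add_py_sq_sub_pz_sq_sin_sub_cosh_mul_sin {x y z : ℝ}
    (hxyz : sin x = cosh y * sin z) :
    px (fun x y z => sin x - cosh y * sin z) x y z ^ 2
        + py (fun x y z => sin x - cosh y * sin z) x y z ^ 2
        - pz (fun x y z => sin x - cosh y * sin z) x y z ^ 2
      = -(sinh y ^ 2 * cos z ^ 2) := by
  simp only [px_sub_mul, py_sub_mul, pz_sub_mul, Real.deriv_sin, Real.deriv_cosh]
  rw [cos_sq' x, hxyz]
  linear_combination -(sin z ^ 2 + cos z ^ 2) * cosh_sq_sub_sinh_sq y - sin_sq_add_cos_sq z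

/-- The surface `sin x = cosh y · sin z` has zero mean curvature and
`F_x² + F_y² − F_z² = −sinh²y · cos²z ≤ 0`: it is spacelike except where
`sinh y · cos z = 0`. -/
theorem stmt_19 (F : ℝ → ℝ → ℝ → ℝ)
    (hF : ∀ x y z : ℝ, F x y z = Real.sin x - Real.cosh y * Real.sin z) :
    ∀ x y z : ℝ, F x y z = 0 →
      Eop F x y z = 0 ∧
      px F x y z ^ 2 + py F x y z ^ 2 - pz F x y z ^ 2
        = -(Real.sinh y ^ 2 * Real.cos z ^ 2) ∧
      px F x y z ^ 2 + py F x y z ^ 2 - pz F x y z ^ 2 ≤ 0 := by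
  obtain rfl : F = fun x y z => sin x - cosh y * sin z :=
    funext fun x => funext fun y => funext (hF x y)
  intro x y z hxyz
  have hsurf : sin x = cosh y * sin z := sub_eq_zero.mp hxyz
  have hgrad := px_sq_add_py_sq_sub_pz_sq_sin_sub_cosh_mul_sin hsurf
  refine ⟨Eop_sin_sub_cosh_mul_sin hsurf, hgrad, ?_⟩
  rw [hgrad, neg_nonpos]
  positivity
end
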